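/- arXiv:1307.5351 — 11 statements merged into one kernel-verified Lean document; each statement's English description precedes it below -/
import Mathlib

section
/- Let n ≥ 2 and let Γ be a full (n+3)-coloring of the standard n-sphere S^n. Assume there is no (n−1)-sphere in S^n containing n + 2 different colors. Then there exist an (n−1)-sphere S in S^n whose image Γ(S) consists of exactly n + 1 colors, and two points x, y ∈ S^n whose colors are the two remaining colors (so Γ(x) ≠ Γ(y) and neither Γ(x) nor Γ(y) belongs to Γ(S)), such that x and y lie in different connected components of S^n \ S. -/
/-!
Pick a point `pₖ` of each colour `k`. These `n + 3` distinct points of `ℝⁿ⁺¹` satisfy a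
nontrivial affine relation `∑ wₖ pₖ = 0`, `∑ wₖ = 0`, and two of its weights `wᵢ, wⱼ` have the
same sign: otherwise only one positive and one negative weight occur, and the relation forces the
two corresponding points to coincide. The hyperplane `H` through the other `n + 1` points
contains two distinct unit vectors, so it meets the open ball; its sphere carries the `n + 1`
colours other than `i, j`, hence by hypothesis no others. Applying an affine equation `φ` of `H`
to the relation leaves `wᵢ φ(pᵢ) + wⱼ φ(pⱼ) = 0`, so `pᵢ` and `pⱼ` lie on opposite sides of `H`,
and the intermediate value theorem for `φ` separates them.
-/

open scoped RealInnerProductSpace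
open Module Set

variable {ι : Type*}

section AffineRelation

variable {𝕜 V : Type*} [Field 𝕜] [AddCommGroup V] [Module 𝕜 V]

theorem exists_affine_relation_of_finrank_add_two_le [FiniteDimensional 𝕜 V] [Fintype ι]
    {v : ι → V} (h : finrank 𝕜 V + 2 ≤ Fintype.card ι) :
    ∃ w : ι → 𝕜, w ≠ 0 ∧ ∑ i, w i = 0 ∧ ∑ i, w i • v i = 0 := by
  have hdep : ¬ AffineIndependent 𝕜 v := fun hv => by
    have := hv.card_le_finrank_succ
    have := Submodule.finrank_le (vectorSpan 𝕜 (range v))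
    omega
  rw [affineIndependent_iff_of_fintype] at hdep
  push Not at hdep
  obtain ⟨w, hw, hwv, i, hi⟩ := hdep
  refine ⟨w, fun h => hi (by simp [h]), hw, ?_⟩
  rwa [Finset.univ.weightedVSub_eq_linear_combination hw] at hwv

theorem exists_ne_mul_pos_of_affine_relation [LinearOrder 𝕜] [IsStrictOrderedRing 𝕜] [Fintype ι]
    {v : ι → V} (hv : Function.Injective v) {w : ι → 𝕜} (hw0 : w ≠ 0) (hw : ∑ i, w i = 0)
    (hwv : ∑ i, w i • v i = 0) : ∃ i j, i ≠ j ∧ 0 < w i * w j := by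
  by_contra! h
  obtain ⟨e, he⟩ := Function.ne_iff.1 hw0
  obtain ⟨a, -, ha⟩ := Finset.exists_pos_of_sum_zero_of_exists_nonzero w hw
    ⟨e, Finset.mem_univ e, he⟩
  obtain ⟨b, -, hb⟩ := Finset.exists_pos_of_sum_zero_of_exists_nonzero (-w)
    (by simp only [Pi.neg_apply, Finset.sum_neg_distrib, hw, neg_zero])
    ⟨e, Finset.mem_univ e, neg_ne_zero.2 he⟩
  rw [Pi.neg_apply, neg_pos] at hb
  have hab : a ≠ b := by rintro rfl; linarith
  have hsupp : ∀ k, k ≠ a ∧ k ≠ b → w k = 0 := fun k hk => by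
    nlinarith [h a k hk.1.symm, h b k hk.2.symm]
  have hsum := Fintype.sum_eq_add a b hab hsupp
  have hvec := Fintype.sum_eq_add (f := fun k => w k • v k) a b hab fun k hk => by
    simp only [hsupp k hk, zero_smul]
  rw [hw] at hsum
  rw [hwv, show w b = -w a by linarith, neg_smul, ← sub_eq_add_neg, ← smul_sub] at hvec
  exact hab (hv (sub_eq_zero.1 ((smul_eq_zero.1 hvec.symm).resolve_left ha.ne')))

theorem mul_nonpos_of_affine_relation [LinearOrder 𝕜] [IsStrictOrderedRing 𝕜]
    [Fintype ι] (ℓ : V →ₗ[𝕜] 𝕜) (c : 𝕜) {v : ι → V} {w : ι → 𝕜} (hw : ∑ k, w k = 0)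
    (hwv : ∑ k, w k • v k = 0) {i j : ι} (hij : i ≠ j) (hsign : 0 < w i * w j)
    (hc : ∀ k, k ≠ i → k ≠ j → ℓ (v k) = c) : (ℓ (v i) - c) * (ℓ (v j) - c) ≤ 0 := by
  have hrel : w i * (ℓ (v i) - c) + w j * (ℓ (v j) - c) = 0 := by
    rw [← Fintype.sum_eq_add (f := fun k => w k * (ℓ (v k) - c)) i j hij fun k hk => by
      simp only [hc k hk.1 hk.2, sub_self, mul_zero]]
    calc ∑ k, w k * (ℓ (v k) - c) = ℓ (∑ k, w k • v k) - (∑ k, w k) * c := by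
          simp [mul_sub, Finset.sum_sub_distrib, Finset.sum_mul]
      _ = 0 := by simp [hwv, hw]
  have key : (w i * w j) * ((ℓ (v i) - c) * (ℓ (v j) - c)) = -(w i * (ℓ (v i) - c)) ^ 2 := by
    linear_combination (w i * (ℓ (v i) - c)) * hrel
  exact le_of_mul_le_mul_left (by rw [key, mul_zero]; exact neg_nonpos.2 (sq_nonneg _)) hsign

end AffineRelation

theorem Set.ncard_compl_pair_add_two {α : Type*} [Finite α] {a b : α} (hab : a ≠ b) :
    ({a, b}ᶜ : Set α).ncard + 2 = Nat.card α := by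
  rw [← Set.ncard_pair hab, Set.ncard_compl_add_ncard]

theorem AffineSubspace.exists_norm_lt_of_mem {E : Type*} [NormedAddCommGroup E]
    [NormedSpace ℝ E] [StrictConvexSpace ℝ E] {s : AffineSubspace ℝ E} {x y : E} (hx : x ∈ s)
    (hy : y ∈ s) (hxy : x ≠ y) (h : ‖x‖ = ‖y‖) : ∃ z ∈ s, ‖z‖ < ‖x‖ := by
  refine ⟨(1 / 2 : ℝ) • (x + y), ?_, (norm_midpoint_lt_iff h).2 hxy⟩
  convert AffineMap.lineMap_mem (1 / 2 : ℝ) hx hy using 1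
  rw [AffineMap.lineMap_apply_module]
  module

theorem connectedComponentIn_ne_of_mul_nonpos {X : Type*} [TopologicalSpace X] {f : X → ℝ}
    (hf : Continuous f) {U : Set X} (hU : ∀ z ∈ U, f z ≠ 0) {x y : X} (hx : x ∈ U) (hy : y ∈ U)
    (hxy : f x * f y ≤ 0) : connectedComponentIn U x ≠ connectedComponentIn U y := by
  intro h
  have hC := (isPreconnected_connectedComponentIn (F := U) (x := x)).image f hf.continuousOn
  have hyC : y ∈ connectedComponentIn U x := h ▸ mem_connectedComponentIn hy
  have h0 : (0 : ℝ) ∈ uIcc (f x) (f y) := by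
    rcases mul_nonpos_iff.1 hxy with ⟨h1, h2⟩ | ⟨h1, h2⟩
    · exact mem_uIcc.2 (Or.inr ⟨h2, h1⟩)
    · exact mem_uIcc.2 (Or.inl ⟨h1, h2⟩)
  obtain ⟨z, hzC, hz⟩ := hC.ordConnected.uIcc_subset (mem_image_of_mem f
    (mem_connectedComponentIn hx)) (mem_image_of_mem f hyC) h0
  exact hU z (connectedComponentIn_subset U x hzC) hz

section InnerProductSpace

variable {E : Type*} [NormedAddCommGroup E] [InnerProductSpace ℝ E]

theorem AffineSubspace.mem_mk'_orthogonal_span_singleton_iff {p u x : E} :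
    x ∈ AffineSubspace.mk' p (ℝ ∙ u)ᗮ ↔ ⟪u, x⟫ = ⟪u, p⟫ := by
  rw [AffineSubspace.mem_mk', Submodule.mem_orthogonal_singleton_iff_inner_right, vsub_eq_sub,
    inner_sub_right, sub_eq_zero]

theorem exists_ne_zero_inner_eq_of_card_le [FiniteDimensional ℝ E] [Finite ι] [Nonempty ι]
    (p : ι → E) (h : Nat.card ι ≤ finrank ℝ E) : ∃ u : E, u ≠ 0 ∧ ∀ k l, ⟪u, p k⟫ = ⟪u, p l⟫ := by
  cases nonempty_fintype ι
  obtain ⟨m, hm⟩ := Nat.exists_eq_add_one_of_ne_zero (Fintype.card_pos (α := ι)).ne'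
  have hD : vectorSpan ℝ (range p) ≠ ⊤ := fun hD => by
    have := finrank_vectorSpan_range_le ℝ p hm
    rw [hD, finrank_top] at this
    rw [Nat.card_eq_fintype_card] at h
    omega
  obtain ⟨u, hu, hu0⟩ := Submodule.exists_mem_ne_zero_of_ne_bot
    (mt Submodule.orthogonal_eq_bot_iff.1 hD)
  refine ⟨u, hu0, fun k l => ?_⟩
  have := (Submodule.mem_orthogonal' _ u).1 hu _
    (vsub_mem_vectorSpan ℝ (mem_range_self k) (mem_range_self l))
  rwa [vsub_eq_sub, inner_sub_right, sub_eq_zero] at this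

theorem exists_hyperplane_through [FiniteDimensional ℝ E] [Finite ι] [Nonempty ι] (p : ι → E)
    (h : Nat.card ι ≤ finrank ℝ E) :
    ∃ (H : AffineSubspace ℝ E) (u : E) (c : ℝ), finrank ℝ H.direction + 1 = finrank ℝ E ∧
      (∀ x, x ∈ H ↔ ⟪u, x⟫ = c) ∧ ∀ k, p k ∈ H := by
  obtain ⟨u, hu0, hu⟩ := exists_ne_zero_inner_eq_of_card_le p h
  obtain ⟨k₀⟩ := ‹Nonempty ι›
  have hmem (x : E) : x ∈ AffineSubspace.mk' (p k₀) (ℝ ∙ u)ᗮ ↔ ⟪u, x⟫ = ⟪u, p k₀⟫ :=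
    AffineSubspace.mem_mk'_orthogonal_span_singleton_iff
  refine ⟨_, u, _, ?_, hmem, fun k => (hmem _).2 (hu k k₀)⟩
  rw [AffineSubspace.direction_mk', ← finrank_span_singleton (K := ℝ) hu0, add_comm,
    Submodule.finrank_add_finrank_orthogonal]

theorem exists_hyperplane_through_all_but_two [FiniteDimensional ℝ E] [Fintype ι] {v : ι → E}
    (hv : Function.Injective v) (hcard : Fintype.card ι = finrank ℝ E + 2) {r : ℝ}
    (hr : ∀ k, ‖v k‖ = r) (hE : 2 ≤ finrank ℝ E) :
    ∃ i j, i ≠ j ∧ ∃ (H : AffineSubspace ℝ E) (u : E) (c : ℝ),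
      finrank ℝ H.direction + 1 = finrank ℝ E ∧ (∀ x, x ∈ H ↔ ⟪u, x⟫ = c) ∧
      (∃ x ∈ H, ‖x‖ < r) ∧ (∀ k, k ≠ i → k ≠ j → v k ∈ H) ∧
      (⟪u, v i⟫ - c) * (⟪u, v j⟫ - c) ≤ 0 := by
  classical
  obtain ⟨w, hw0, hw, hwv⟩ := exists_affine_relation_of_finrank_add_two_le (v := v) hcard.ge
  obtain ⟨i, j, hij, hsign⟩ := exists_ne_mul_pos_of_affine_relation hv hw0 hw hwv
  have hS : ({i, j}ᶜ : Set ι).ncard = finrank ℝ E := by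
    have := Set.ncard_compl_pair_add_two hij
    rw [Nat.card_eq_fintype_card, hcard] at this
    omega
  set S : Set ι := {i, j}ᶜ
  obtain ⟨k₀, hk₀, k₁, hk₁, hk⟩ := Set.one_lt_ncard_iff_nontrivial.1 (by omega : 1 < S.ncard)
  have : Nonempty S := ⟨⟨k₀, hk₀⟩⟩
  obtain ⟨H, u, c, hdim, hH, hvH⟩ := exists_hyperplane_through (fun k : S => v k)
    (by rw [Nat.card_coe_set_eq, hS])
  have hvH' (k) (hki : k ≠ i) (hkj : k ≠ j) : v k ∈ H := hvH ⟨k, by simp [S, hki, hkj]⟩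
  refine ⟨i, j, hij, H, u, c, hdim, hH, ?_, hvH', ?_⟩
  · rw [← hr k₀]
    exact AffineSubspace.exists_norm_lt_of_mem (hvH ⟨k₀, hk₀⟩) (hvH ⟨k₁, hk₁⟩) (hv.ne hk)
      (by rw [hr, hr])
  · exact mul_nonpos_of_affine_relation (innerₛₗ ℝ u) c hw hwv hij hsign
      fun k hki hkj => (hH _).1 (hvH' k hki hkj)

end InnerProductSpace

/-- Separation lemma: if `Γ` is a full `(n+3)`-coloring of the standard `n`-sphere (`n ≥ 2`)
with no `(n-1)`-sphere containing `n + 2` colors, then there are an `(n-1)`-sphere `S`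
carrying exactly `n + 1` colors and two points, of the two remaining (distinct) colors,
lying in different connected components of the complement of `S` in the sphere. -/
theorem separation_lemma (n : ℕ) (hn : 2 ≤ n)
    (Γ : (Metric.sphere (0 : EuclideanSpace ℝ (Fin (n + 1))) 1) → Fin (n + 3))
    (hΓ : Function.Surjective Γ)
    (hno : ∀ H : AffineSubspace ℝ (EuclideanSpace ℝ (Fin (n + 1))),
      Module.finrank ℝ H.direction = n → (∃ x ∈ H, ‖x‖ < 1) →
      (Γ '' {p | (p : EuclideanSpace ℝ (Fin (n + 1))) ∈ H}).ncard < n + 2) :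
    ∃ H : AffineSubspace ℝ (EuclideanSpace ℝ (Fin (n + 1))),
      Module.finrank ℝ H.direction = n ∧
      (∃ x ∈ H, ‖x‖ < 1) ∧
      (Γ '' {p | (p : EuclideanSpace ℝ (Fin (n + 1))) ∈ H}).ncard = n + 1 ∧
      ∃ x y : (Metric.sphere (0 : EuclideanSpace ℝ (Fin (n + 1))) 1),
        Γ x ≠ Γ y ∧
        Γ x ∉ Γ '' {p | (p : EuclideanSpace ℝ (Fin (n + 1))) ∈ H} ∧
        Γ y ∉ Γ '' {p | (p : EuclideanSpace ℝ (Fin (n + 1))) ∈ H} ∧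
        x ∈ {p : (Metric.sphere (0 : EuclideanSpace ℝ (Fin (n + 1))) 1) |
              (p : EuclideanSpace ℝ (Fin (n + 1))) ∉ H} ∧
        y ∈ {p : (Metric.sphere (0 : EuclideanSpace ℝ (Fin (n + 1))) 1) |
              (p : EuclideanSpace ℝ (Fin (n + 1))) ∉ H} ∧
        connectedComponentIn
            {p : (Metric.sphere (0 : EuclideanSpace ℝ (Fin (n + 1))) 1) |
              (p : EuclideanSpace ℝ (Fin (n + 1))) ∉ H} x ≠
          connectedComponentIn
            {p : (Metric.sphere (0 : EuclideanSpace ℝ (Fin (n + 1))) 1) |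
              (p : EuclideanSpace ℝ (Fin (n + 1))) ∉ H} y := by
  choose pt hpt using hΓ
  let v : Fin (n + 3) → EuclideanSpace ℝ (Fin (n + 1)) := fun k => pt k
  have hv : Function.Injective v := fun a b h => by rw [← hpt a, ← hpt b, Subtype.ext h]
  obtain ⟨i, j, hij, H, u, c, hdim, hH, hball, hvH, hside⟩ :=
    exists_hyperplane_through_all_but_two hv (by simp) (r := 1) (by simp [v]) (by simp; omega)
  replace hdim : finrank ℝ H.direction = n := by simpa using hdim
  have hcompl : ({i, j}ᶜ : Set (Fin (n + 3))).ncard = n + 1 := by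
    simpa using Set.ncard_compl_pair_add_two hij
  have hcolors : Γ '' {p | (p : EuclideanSpace ℝ (Fin (n + 1))) ∈ H} = {i, j}ᶜ := by
    symm
    refine Set.eq_of_subset_of_ncard_le (fun k hk => ⟨pt k, ?_, hpt k⟩) ?_
    · simp only [mem_compl_iff, mem_insert_iff, mem_singleton_iff, not_or] at hk
      exact hvH k hk.1 hk.2
    · have := hno H hdim hball
      omega
  have hiΓ : Γ (pt i) ∉ Γ '' {p | (p : EuclideanSpace ℝ (Fin (n + 1))) ∈ H} := by
    simp [hpt, hcolors]
  have hjΓ : Γ (pt j) ∉ Γ '' {p | (p : EuclideanSpace ℝ (Fin (n + 1))) ∈ H} := by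
    simp [hpt, hcolors]
  have hi : v i ∉ H := fun h => hiΓ (mem_image_of_mem Γ h)
  have hj : v j ∉ H := fun h => hjΓ (mem_image_of_mem Γ h)
  refine ⟨H, hdim, hball, hcolors ▸ hcompl, pt i, pt j, by rwa [hpt, hpt], hiΓ, hjΓ, hi, hj, ?_⟩
  exact connectedComponentIn_ne_of_mul_nonpos
    (f := fun p : Metric.sphere (0 : EuclideanSpace ℝ (Fin (n + 1))) 1 => ⟪u, ↑p⟫ - c)
    (by fun_prop) (fun p hp => sub_ne_zero.2 (mt (hH _).2 hp)) hi hj hside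
end

section
/- Let n ≥ 2 and let Γ be a full (n+3)-coloring of the standard n-sphere S^n such that no (n−1)-sphere in S^n contains n + 2 or more colors. Then for every k with 2 ≤ k ≤ n − 2, no k-sphere in S^n contains k + 3 or more colors. -/
private lemma sphere_not_subset_aux (n : ℕ)
    (A : AffineSubspace ℝ (EuclideanSpace ℝ (Fin (n + 1))))
    (hA : Module.finrank ℝ A.direction ≤ n)
    (hsub : ∀ x : EuclideanSpace ℝ (Fin (n+1)), ‖x‖ = 1 → x ∈ A) : False := by
  have hmem : ∀ i : Fin (n+1), (EuclideanSpace.single i (1:ℝ)) ∈ A.direction := by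
    intro i
    have h1 : ‖EuclideanSpace.single i (1:ℝ)‖ = 1 := by simp
    have h2 : ‖-EuclideanSpace.single i (1:ℝ)‖ = 1 := by simp
    have hd := AffineSubspace.vsub_mem_direction (hsub _ h1) (hsub _ h2)
    have h3 : EuclideanSpace.single i (1:ℝ) -ᵥ (-EuclideanSpace.single i (1:ℝ))
        = (2:ℝ) • EuclideanSpace.single i (1:ℝ) := by
      simp [two_smul]
    rw [h3] at hd
    have := A.direction.smul_mem (2:ℝ)⁻¹ hd
    simpa using this
  have htop : A.direction = ⊤ := by
    rw [eq_top_iff, ← (EuclideanSpace.basisFun (Fin (n+1)) ℝ).toBasis.span_eq,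
      Submodule.span_le]
    rintro v ⟨i, rfl⟩
    simpa [EuclideanSpace.basisFun_apply] using hmem i
  rw [htop, finrank_top, finrank_euclideanSpace_fin] at hA
  omega

private lemma finrank_insert_aux (n : ℕ)
    (A : AffineSubspace ℝ (EuclideanSpace ℝ (Fin (n + 1))))
    (x p₀ : EuclideanSpace ℝ (Fin (n+1))) (hp₀ : p₀ ∈ A) (hx : x ∉ A) :
    Module.finrank ℝ (affineSpan ℝ (insert x (A : Set _))).direction
      = Module.finrank ℝ A.direction + 1 := by
  rw [AffineSubspace.direction_affineSpan_insert hp₀]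
  have hv : x -ᵥ p₀ ∉ A.direction := by
    rwa [AffineSubspace.vsub_right_mem_direction_iff_mem hp₀]
  have hinf : (Submodule.span ℝ {x -ᵥ p₀}) ⊓ A.direction = ⊥ := by
    rw [eq_bot_iff]
    rintro v hvm
    obtain ⟨hv1, hv2⟩ := Submodule.mem_inf.mp hvm
    rw [Submodule.mem_span_singleton] at hv1
    obtain ⟨r, rfl⟩ := hv1
    rcases eq_or_ne r 0 with rfl | hr
    · simp
    · exact absurd (by simpa [smul_smul, inv_mul_cancel₀ hr]
        using A.direction.smul_mem r⁻¹ hv2) hv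
  have hvne : x -ᵥ p₀ ≠ 0 := by
    intro h; apply hv; rw [h]; exact Submodule.zero_mem _
  have := Submodule.finrank_sup_add_finrank_inf_eq (Submodule.span ℝ {x -ᵥ p₀}) A.direction
  rw [hinf, finrank_bot, finrank_span_singleton hvne] at this
  omega

/-- Observation: if a full `(n+3)`-coloring of the standard `n`-sphere (`n ≥ 2`) has no
`(n-1)`-sphere with `n + 2` or more colors, then for every `k` with `2 ≤ k ≤ n - 2`,
no `k`-sphere (intersection of the sphere with a `(k+1)`-dimensional affine subspace
meeting the open unit ball) contains `k + 3` or more colors. -/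
theorem no_low_dim_sphere_many_colors (n : ℕ) (hn : 2 ≤ n)
    (Γ : (Metric.sphere (0 : EuclideanSpace ℝ (Fin (n + 1))) 1) → Fin (n + 3))
    (hΓ : Function.Surjective Γ)
    (hno : ∀ H : AffineSubspace ℝ (EuclideanSpace ℝ (Fin (n + 1))),
      Module.finrank ℝ H.direction = n → (∃ x ∈ H, ‖x‖ < 1) →
      (Γ '' {p | (p : EuclideanSpace ℝ (Fin (n + 1))) ∈ H}).ncard < n + 2) :
    ∀ k : ℕ, 2 ≤ k → k ≤ n - 2 →
      ∀ A : AffineSubspace ℝ (EuclideanSpace ℝ (Fin (n + 1))),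
        Module.finrank ℝ A.direction = k + 1 → (∃ x ∈ A, ‖x‖ < 1) →
        (Γ '' {p | (p : EuclideanSpace ℝ (Fin (n + 1))) ∈ A}).ncard < k + 3 := by
  have key : ∀ j d : ℕ, d + j = n →
      ∀ A : AffineSubspace ℝ (EuclideanSpace ℝ (Fin (n + 1))),
        Module.finrank ℝ A.direction = d → (∃ x ∈ A, ‖x‖ < 1) →
        (Γ '' {p | (p : EuclideanSpace ℝ (Fin (n + 1))) ∈ A}).ncard < d + 2 := by
    intro j
    induction j with
    | zero =>
      intro d hd A hA hball
      rw [Nat.add_zero] at hd; subst hd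
      exact hno A hA hball
    | succ j ih =>
      intro d hd A hA hball
      by_contra hge
      push_neg at hge
      obtain ⟨p₀, hp₀, hp₀n⟩ := hball
      -- find a sphere point x ∉ A with enough colors on the extension
      have hstep : ∃ x : (Metric.sphere (0 : EuclideanSpace ℝ (Fin (n + 1))) 1),
          (x : EuclideanSpace ℝ (Fin (n+1))) ∉ A ∧
          d + 3 ≤ (Γ '' {p | (p : EuclideanSpace ℝ (Fin (n + 1))) ∈
            affineSpan ℝ (insert (x : EuclideanSpace ℝ (Fin (n+1))) (A : Set _))}).ncard := by
        have hAB : ∀ x : (Metric.sphere (0 : EuclideanSpace ℝ (Fin (n + 1))) 1),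
            (Γ '' {p | (p : EuclideanSpace ℝ (Fin (n + 1))) ∈ A}) ⊆
            (Γ '' {p | (p : EuclideanSpace ℝ (Fin (n + 1))) ∈
              affineSpan ℝ (insert (x : EuclideanSpace ℝ (Fin (n+1))) (A : Set _))}) := by
          intro x
          apply Set.image_mono
          intro p hp
          exact subset_affineSpan ℝ _ (Set.mem_insert_of_mem _ hp)
        by_cases huniv : (Γ '' {p | (p : EuclideanSpace ℝ (Fin (n + 1))) ∈ A}) = Set.univ
        · -- all colors present already; pick any sphere point off A
          have hex : ∃ x : EuclideanSpace ℝ (Fin (n+1)), ‖x‖ = 1 ∧ x ∉ A := by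
            by_contra h
            push_neg at h
            exact sphere_not_subset_aux n A (by omega) fun x hx => h x hx
          obtain ⟨x, hx1, hxA⟩ := hex
          have hxs : x ∈ Metric.sphere (0 : EuclideanSpace ℝ (Fin (n + 1))) 1 := by
            simpa [mem_sphere_iff_norm] using hx1
          refine ⟨⟨x, hxs⟩, hxA, ?_⟩
          calc d + 3 ≤ n + 3 := by omega
            _ = (Set.univ : Set (Fin (n+3))).ncard := by
                rw [Set.ncard_univ]; simp
            _ = (Γ '' {p | (p : EuclideanSpace ℝ (Fin (n + 1))) ∈ A}).ncard := by rw [huniv]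
            _ ≤ _ := Set.ncard_le_ncard (hAB ⟨x, hxs⟩) (Set.toFinite _)
        · -- a missing color exists
          obtain ⟨c, hc⟩ := (Set.ne_univ_iff_exists_notMem _).mp huniv
          obtain ⟨x, hxc⟩ := hΓ c
          have hxA : (x : EuclideanSpace ℝ (Fin (n+1))) ∉ A := by
            intro hmem
            exact hc ⟨x, hmem, hxc⟩
          refine ⟨x, hxA, ?_⟩
          have hins : insert c (Γ '' {p | (p : EuclideanSpace ℝ (Fin (n + 1))) ∈ A}) ⊆
              (Γ '' {p | (p : EuclideanSpace ℝ (Fin (n + 1))) ∈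
                affineSpan ℝ (insert (x : EuclideanSpace ℝ (Fin (n+1))) (A : Set _))}) := by
            rintro c' (rfl | hc')
            · exact ⟨x, subset_affineSpan ℝ _ (Set.mem_insert _ _), hxc⟩
            · exact hAB x hc'
          calc d + 3 ≤ (Γ '' {p | (p : EuclideanSpace ℝ (Fin (n + 1))) ∈ A}).ncard + 1 := by
                omega
            _ = (insert c (Γ '' {p | (p : EuclideanSpace ℝ (Fin (n + 1))) ∈ A})).ncard := by
                rw [Set.ncard_insert_of_notMem hc (Set.toFinite _)]
            _ ≤ _ := Set.ncard_le_ncard hins (Set.toFinite _)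
      obtain ⟨x, hxA, hcard⟩ := hstep
      have hBd := finrank_insert_aux n A (x : EuclideanSpace ℝ (Fin (n+1))) p₀ hp₀ hxA
      rw [hA] at hBd
      have hBball : ∃ y ∈ affineSpan ℝ (insert (x : EuclideanSpace ℝ (Fin (n+1))) (A : Set _)),
          ‖y‖ < 1 := ⟨p₀, subset_affineSpan ℝ _ (Set.mem_insert_of_mem _ hp₀), hp₀n⟩
      have := ih (d + 1) (by omega) _ hBd hBball
      omega
  intro k hk2 hkn A hA hball
  have := key (n - (k + 1)) (k + 1) (by omega) A hA hball
  omega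
end

section
/- Let n ≥ 2 and k ≥ n + 2. For every full k-coloring Γ of the standard n-sphere S^n, there exists a great (n−1)-sphere of S^n that contains at least n + 1 different colors; that is, there exists an n-dimensional linear subspace P of ℝ^{n+1} such that the image Γ(S^n ∩ P) has at least n + 1 elements. -/
open Module Submodule Finset

set_option maxHeartbeats 1000000

/-- Extend a submodule of a finite-dimensional real vector space by `j` dimensions. -/
lemma aux_extend {V : Type*} [AddCommGroup V] [Module ℝ V] [FiniteDimensional ℝ V] :
    ∀ (j : ℕ) (W : Submodule ℝ V), finrank ℝ W + j ≤ finrank ℝ V →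
    ∃ W' : Submodule ℝ V, W ≤ W' ∧ finrank ℝ W' = finrank ℝ W + j := by
  intro j
  induction j with
  | zero => exact fun W _ => ⟨W, le_rfl, rfl⟩
  | succ j ih =>
    intro W hW
    have hlt : finrank ℝ W < finrank ℝ V := by omega
    obtain ⟨x, hx⟩ := W.exists_of_finrank_lt hlt
    have hxW : x ∉ W := by simpa using hx 1 one_ne_zero
    have hx0 : x ≠ 0 := fun h => hxW (h ▸ W.zero_mem)
    have hinf : W ⊓ (ℝ ∙ x) = ⊥ := by
      rw [eq_bot_iff]
      intro y hy
      rw [Submodule.mem_inf] at hy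
      obtain ⟨hyW, hyx⟩ := hy
      obtain ⟨r, rfl⟩ := Submodule.mem_span_singleton.mp hyx
      rcases eq_or_ne r 0 with h | h
      · simp [h]
      · exact absurd hyW (hx r h)
    have hfr : finrank ℝ ↥(W ⊔ (ℝ ∙ x)) = finrank ℝ W + 1 := by
      have h2 := Submodule.finrank_sup_add_finrank_inf_eq W (ℝ ∙ x)
      rw [hinf, finrank_bot, finrank_span_singleton hx0] at h2
      omega
    obtain ⟨W', hle, hW'⟩ := ih (W ⊔ (ℝ ∙ x)) (by omega)
    exact ⟨W', le_trans le_sup_left hle, by omega⟩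

/-- If every color in a finset `C` is attained by `Γ` on `S`, then `#C ≤ (Γ '' S).ncard`. -/
lemma aux_card_le_ncard {k : ℕ} {X : Type*} (Γ : X → Fin k) (S : Set X)
    (C : Finset (Fin k)) (h : ∀ c ∈ C, ∃ x ∈ S, Γ x = c) :
    C.card ≤ (Γ '' S).ncard := by
  have hsub : (C : Set (Fin k)) ⊆ Γ '' S := by
    intro c hc
    obtain ⟨x, hxS, hxc⟩ := h c hc
    exact ⟨x, hxS, hxc⟩
  calc C.card = (C : Set (Fin k)).ncard := (Set.ncard_coe_finset C).symm
    _ ≤ (Γ '' S).ncard := Set.ncard_le_ncard hsub (Set.toFinite _)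

/-- Euclidean analogue of the main theorem: for `n ≥ 2` and `k ≥ n + 2`, every full
`k`-coloring of the standard `n`-sphere admits a great `(n-1)`-sphere (intersection of the
sphere with an `n`-dimensional linear subspace) containing at least `n + 1` colors. -/
theorem great_sphere_coloring (n k : ℕ) (hn : 2 ≤ n) (hk : n + 2 ≤ k)
    (Γ : (Metric.sphere (0 : EuclideanSpace ℝ (Fin (n + 1))) 1) → Fin k)
    (hΓ : Function.Surjective Γ) :
    ∃ P : Submodule ℝ (EuclideanSpace ℝ (Fin (n + 1))),
      Module.finrank ℝ P = n ∧
      n + 1 ≤ (Γ '' {p | (p : EuclideanSpace ℝ (Fin (n + 1))) ∈ P}).ncard := by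
  classical
  have hfinE : finrank ℝ (EuclideanSpace ℝ (Fin (n + 1))) = n + 1 := finrank_euclideanSpace_fin
  -- representatives of n+2 distinct colors
  obtain ⟨f, hΓf⟩ : ∃ f : Fin (n + 2) → (Metric.sphere (0 : EuclideanSpace ℝ (Fin (n + 1))) 1),
      ∀ i, Γ (f i) = Fin.castLE hk i :=
    ⟨fun i => Function.surjInv hΓ (Fin.castLE hk i),
     fun i => Function.rightInverse_surjInv hΓ _⟩
  have hΓfinj : ∀ i j : Fin (n + 2), Γ (f i) = Γ (f j) → i = j := by
    intro i j h
    rw [hΓf, hΓf] at h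
    exact Fin.ext (by simpa using congrArg Fin.val h)
  obtain ⟨v, hvf⟩ : ∃ v : Fin (n + 2) → EuclideanSpace ℝ (Fin (n + 1)),
      ∀ i, v i = (f i : EuclideanSpace ℝ (Fin (n + 1))) := ⟨_, fun i => rfl⟩
  by_cases hli : ∀ t : Finset (Fin (n + 2)), t.card = n + 1 →
      LinearIndependent ℝ (fun i : t => v i)
  · -- all (n+1)-subfamilies independent
    have hsubli : ∀ t : Finset (Fin (n + 2)), t.card ≤ n + 1 →
        LinearIndependent ℝ (fun i : t => v i) := by
      intro t ht
      obtain ⟨t', htt', ht'⟩ := Finset.exists_superset_card_eq ht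
        (by rw [Fintype.card_fin]; omega)
      exact (hli t' ht').comp (fun i => ⟨i.1, htt' i.2⟩)
        (fun i j hij => Subtype.ext (by simpa using congrArg Subtype.val hij))
    have hnotli : ¬ LinearIndependent ℝ v := by
      intro h
      have := h.fintype_card_le_finrank
      rw [hfinE, Fintype.card_fin] at this
      omega
    obtain ⟨a, hsum, p, hp⟩ := Fintype.not_linearIndependent_iff.mp hnotli
    obtain ⟨q, hq⟩ := exists_ne p
    have hpq : p ≠ q := hq.symm
    set A2 : Finset (Fin (n + 2)) := Finset.univ \ {p, q} with hA2
    have hA2c : A2.card = n := by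
      rw [hA2, Finset.card_sdiff_of_subset (Finset.subset_univ _), Finset.card_pair hpq,
        Finset.card_univ, Fintype.card_fin]
      omega
    obtain ⟨y, hydef⟩ : ∃ y : EuclideanSpace ℝ (Fin (n + 1)),
      y = a p • v p + a q • v q := ⟨_, rfl⟩
    have hpair : ∑ i ∈ ({p, q} : Finset (Fin (n + 2))), a i • v i = a p • v p + a q • v q :=
      Finset.sum_pair hpq
    have hsplit : (∑ i ∈ A2, a i • v i) + y = 0 := by
      rw [hydef, ← hpair, hA2, Finset.sum_sdiff (Finset.subset_univ _)]
      exact hsum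
    have hy2 : y = -∑ i ∈ A2, a i • v i := eq_neg_of_add_eq_zero_right hsplit
    -- y ≠ 0
    have hyne : y ≠ 0 := by
      intro h0
      obtain ⟨t', htt', ht'⟩ := Finset.exists_superset_card_eq (n := n + 1)
        (s := ({p, q} : Finset (Fin (n + 2))))
        (by rw [Finset.card_pair hpq]; omega) (by rw [Fintype.card_fin]; omega)
      set c : Fin (n + 2) → ℝ := fun i => if i = p then a p else if i = q then a q else 0
        with hc
      have e1 : c p = a p := by simp [hc]
      have e2 : c q = a q := by simp [hc, hq]
      have hsum0 : ∑ i : t', c i • v i = 0 := by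
        rw [Finset.sum_coe_sort t' (fun i => c i • v i)]
        rw [← Finset.sum_subset htt' (fun x _ hnx => ?_)]
        · rw [Finset.sum_pair hpq, e1, e2, ← hydef, h0]
        · have hxp : x ≠ p := fun h => hnx (h ▸ Finset.mem_insert_self _ _)
          have hxq : x ≠ q := fun h =>
            hnx (h ▸ Finset.mem_insert_of_mem (Finset.mem_singleton_self _))
          simp [hc, hxp, hxq]
      have hz := Fintype.linearIndependent_iff.mp (hli t' ht')
        (fun i : t' => c i) hsum0 ⟨p, htt' (Finset.mem_insert_self _ _)⟩
      rw [e1] at hz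
      exact hp hz
    have hwnorm : ‖(‖y‖⁻¹ • y : EuclideanSpace ℝ (Fin (n + 1)))‖ = 1 := by
      rw [norm_smul, norm_inv, norm_norm, inv_mul_cancel₀ (norm_ne_zero_iff.mpr hyne)]
    obtain ⟨w, hwdef⟩ : ∃ w : (Metric.sphere (0 : EuclideanSpace ℝ (Fin (n + 1))) 1),
        (w : EuclideanSpace ℝ (Fin (n + 1))) = ‖y‖⁻¹ • y :=
      ⟨⟨‖y‖⁻¹ • y, by rw [mem_sphere_zero_iff_norm]; exact hwnorm⟩, rfl⟩
    by_cases hwm : ∃ m ∈ A2, Γ w = Γ (f m)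
    · -- the extra color coincides with that of some m in A2: drop m (and one more l)
      obtain ⟨m, hmA2, hwΓ⟩ := hwm
      have hA2e : (A2.erase m).Nonempty := by
        rw [← Finset.card_pos, Finset.card_erase_of_mem hmA2, hA2c]
        omega
      obtain ⟨l, hl⟩ := hA2e
      have hlm : l ≠ m := (Finset.mem_erase.mp hl).1
      have hlA2 : l ∈ A2 := (Finset.mem_erase.mp hl).2
      set T : Finset (Fin (n + 2)) := Finset.univ \ {m, l} with hT
      have hTc : T.card = n := by
        rw [hT, Finset.card_sdiff_of_subset (Finset.subset_univ _), Finset.card_pair hlm.symm,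
          Finset.card_univ, Fintype.card_fin]
        omega
      have hTli := hsubli T (by omega)
      set P := span ℝ (Set.range fun i : T => v i) with hP
      have hPrank : finrank ℝ P = n := by
        rw [hP, finrank_span_eq_card hTli, Fintype.card_coe, hTc]
      have hmemP : ∀ i ∈ T, v i ∈ P := fun i hi => subset_span ⟨⟨i, hi⟩, rfl⟩
      have hnotpq : ∀ i ∈ A2, i ≠ p ∧ i ≠ q := by
        intro i hi
        rw [hA2, Finset.mem_sdiff, Finset.mem_insert, Finset.mem_singleton] at hi
        exact ⟨fun h => hi.2 (Or.inl h), fun h => hi.2 (Or.inr h)⟩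
      have hpT : p ∈ T := by
        rw [hT, Finset.mem_sdiff, Finset.mem_insert, Finset.mem_singleton]
        refine ⟨Finset.mem_univ _, fun h => ?_⟩
        rcases h with h | h
        · exact (hnotpq m hmA2).1 h.symm
        · exact (hnotpq l hlA2).1 h.symm
      have hqT : q ∈ T := by
        rw [hT, Finset.mem_sdiff, Finset.mem_insert, Finset.mem_singleton]
        refine ⟨Finset.mem_univ _, fun h => ?_⟩
        rcases h with h | h
        · exact (hnotpq m hmA2).2 h.symm
        · exact (hnotpq l hlA2).2 h.symm
      have hwP : ((w : EuclideanSpace ℝ (Fin (n + 1)))) ∈ P := by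
        rw [hwdef]
        have hyP : y ∈ P := by
          rw [hydef]
          exact add_mem (P.smul_mem _ (hmemP p hpT)) (P.smul_mem _ (hmemP q hqT))
        exact P.smul_mem _ hyP
      have hmT : m ∉ T := by
        rw [hT, Finset.mem_sdiff]
        intro h
        exact h.2 (Finset.mem_insert_self _ _)
      refine ⟨P, hPrank, ?_⟩
      have := aux_card_le_ncard Γ
        {x : (Metric.sphere (0 : EuclideanSpace ℝ (Fin (n + 1))) 1) |
          (x : EuclideanSpace ℝ (Fin (n + 1))) ∈ P}
        (insert (Γ w) (T.image fun i => Γ (f i))) ?_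
      · have hnotmem : Γ w ∉ T.image fun i => Γ (f i) := by
          rw [Finset.mem_image]
          rintro ⟨i, hiT, hi⟩
          exact hmT ((hΓfinj m i (hwΓ.symm.trans hi.symm)) ▸ hiT)
        rwa [Finset.card_insert_of_notMem hnotmem,
          Finset.card_image_of_injective _ (fun i j h => hΓfinj i j h), hTc] at this
      · intro c hc
        rw [Finset.mem_insert] at hc
        rcases hc with h | h
        · exact ⟨w, hwP, h.symm⟩
        · rw [Finset.mem_image] at h
          obtain ⟨i, hiT, hi⟩ := h
          exact ⟨f i, by rw [Set.mem_setOf_eq, ← hvf i]; exact hmemP i hiT, hi⟩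
    · -- the extra color is new relative to A2: take span of A2
      push_neg at hwm
      have hA2li := hsubli A2 (by omega)
      set P := span ℝ (Set.range fun i : A2 => v i) with hP
      have hPrank : finrank ℝ P = n := by
        rw [hP, finrank_span_eq_card hA2li, Fintype.card_coe, hA2c]
      have hmemP : ∀ i ∈ A2, v i ∈ P := fun i hi => subset_span ⟨⟨i, hi⟩, rfl⟩
      have hwP : ((w : EuclideanSpace ℝ (Fin (n + 1)))) ∈ P := by
        rw [hwdef]
        have hyP : y ∈ P := by
          rw [hy2]
          exact P.neg_mem (sum_mem fun i hi => P.smul_mem _ (hmemP i hi))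
        exact P.smul_mem _ hyP
      refine ⟨P, hPrank, ?_⟩
      have := aux_card_le_ncard Γ
        {x : (Metric.sphere (0 : EuclideanSpace ℝ (Fin (n + 1))) 1) |
          (x : EuclideanSpace ℝ (Fin (n + 1))) ∈ P}
        (insert (Γ w) (A2.image fun i => Γ (f i))) ?_
      · have hnotmem : Γ w ∉ A2.image fun i => Γ (f i) := by
          rw [Finset.mem_image]
          rintro ⟨i, hiA2, hi⟩
          exact hwm i hiA2 hi.symm
        rwa [Finset.card_insert_of_notMem hnotmem,
          Finset.card_image_of_injective _ (fun i j h => hΓfinj i j h), hA2c] at this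
      · intro c hc
        rw [Finset.mem_insert] at hc
        rcases hc with h | h
        · exact ⟨w, hwP, h.symm⟩
        · rw [Finset.mem_image] at h
          obtain ⟨i, hiA2, hi⟩ := h
          exact ⟨f i, by rw [Set.mem_setOf_eq, ← hvf i]; exact hmemP i hiA2, hi⟩
  · -- some (n+1)-subfamily is dependent: its span has dimension ≤ n, extend it
    push_neg at hli
    obtain ⟨t, htc, hdep⟩ := hli
    set W := span ℝ (Set.range fun i : t => v i) with hW
    have hle : finrank ℝ W ≤ n := by
      have h1 : Set.finrank ℝ (Set.range fun i : t => v i) ≤ n + 1 := by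
        have := finrank_range_le_card (R := ℝ) (fun i : t => v i)
        rwa [Fintype.card_coe, htc] at this
      have h2 : Fintype.card t ≠ Set.finrank ℝ (Set.range fun i : t => v i) :=
        fun h => hdep (linearIndependent_iff_card_eq_finrank_span.mpr h)
      rw [Fintype.card_coe, htc] at h2
      have h3 : finrank ℝ W = Set.finrank ℝ (Set.range fun i : t => v i) := rfl
      omega
    obtain ⟨W', hWW', hW'⟩ := aux_extend (n - finrank ℝ W) W (by omega)
    have hW'rank : finrank ℝ W' = n := by omega
    have hmemW' : ∀ i ∈ t, v i ∈ W' := fun i hi => hWW' (subset_span ⟨⟨i, hi⟩, rfl⟩)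
    refine ⟨W', hW'rank, ?_⟩
    have := aux_card_le_ncard Γ
      {x : (Metric.sphere (0 : EuclideanSpace ℝ (Fin (n + 1))) 1) |
        (x : EuclideanSpace ℝ (Fin (n + 1))) ∈ W'}
      (t.image fun i => Γ (f i)) ?_
    · rwa [Finset.card_image_of_injective _ (fun i j h => hΓfinj i j h), htc] at this
    · intro c hc
      rw [Finset.mem_image] at hc
      obtain ⟨i, hit, hi⟩ := hc
      exact ⟨f i, by rw [Set.mem_setOf_eq, ← hvf i]; exact hmemW' i hit, hi⟩
end

section
/- Let n ≥ 2. There exists a full (n+2)-coloring Γ of the standard n-sphere S^n such that every (n−1)-sphere in S^n contains at most n + 1 colors; that is, for every affine hyperplane H of ℝ^{n+1} whose distance from the origin is strictly less than 1, the image Γ(S^n ∩ H) has at most n + 1 elements. -/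
/-!
Write a point of the sphere as `(y₀, …, yₙ)` and group the coordinates into pairs
`(yₘ₋₁, yₘ)`, `m ≡ n [MOD 2]`, from the top down. A point whose highest nonvanishing pair is
`(yₘ₋₁, yₘ)` gets color `m` or `m + 1` according to the sign of `yₘ₋₁ yₘ`. At the bottom, for even
`n` the single coordinate `y₀` gets `0` or `1` by its sign, and for odd `n` the pair `(y₀, y₁)`
carries the three colors `0, 1, 2`.

Let `u · y = t` be a hyperplane. If `u` has a nonzero coordinate below the top pair, a color missed
by the section of the sphere of the lower coordinates is also missed here, because points with a
nonvanishing top pair only get the two top colors. Otherwise the equation only sees the top pair: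
for `t ≠ 0` that pair never vanishes, so color `0` is missed, and for `t = 0` the sign of
`yₘ₋₁ yₘ` is forced by the sign of `uₘ₋₁ uₘ`, so one of the two top colors is missed. At the
bottom, a hyperplane meets `S⁰` in at most one point and `S¹` in at most two points.
-/

open Finset

noncomputable def circleColoring (y₀ y₁ : ℝ) : ℕ :=
  if y₁ = 0 then 0 else if 0 ≤ y₀ * y₁ then 1 else 2

noncomputable def pairColoring : ℕ → (ℕ → ℝ) → ℕ
  | 0, y => if 0 < y 0 then 0 else 1
  | 1, y => circleColoring (y 0) (y 1)
  | k + 2, y =>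
    if y (k + 1) = 0 ∧ y (k + 2) = 0 then pairColoring k y
    else if 0 ≤ y (k + 1) * y (k + 2) then k + 2 else k + 3

theorem pairColoring_le : ∀ (k : ℕ) (y : ℕ → ℝ), pairColoring k y ≤ k + 1
  | 0, y => by unfold pairColoring; split_ifs <;> omega
  | 1, y => by unfold pairColoring circleColoring; split_ifs <;> omega
  | k + 2, y => by
    have := pairColoring_le k y
    unfold pairColoring; split_ifs <;> omega

theorem pairColoring_add_two_of_top_eq_zero {k : ℕ} {y : ℕ → ℝ}
    (h : y (k + 1) = 0 ∧ y (k + 2) = 0) : pairColoring (k + 2) y = pairColoring k y := by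
  rw [pairColoring, if_pos h]

theorem pairColoring_add_two_of_top_ne_zero {k : ℕ} {y : ℕ → ℝ}
    (h : ¬(y (k + 1) = 0 ∧ y (k + 2) = 0)) :
    pairColoring (k + 2) y = if 0 ≤ y (k + 1) * y (k + 2) then k + 2 else k + 3 := by
  rw [pairColoring, if_neg h]

theorem circle_inter_line_eq_or_eq {u₀ u₁ : ℝ} (hu : u₀ ≠ 0 ∨ u₁ ≠ 0) (t : ℝ) :
    ∃ p q : ℝ × ℝ, ∀ y₀ y₁ : ℝ, y₀ ^ 2 + y₁ ^ 2 = 1 → u₀ * y₀ + u₁ * y₁ = t →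
      (y₀, y₁) = p ∨ (y₀, y₁) = q := by
  set N := u₀ ^ 2 + u₁ ^ 2
  have hN : N ≠ 0 := by rcases hu with h | h <;> positivity
  let point (w : ℝ) : ℝ × ℝ := ((u₀ * t + u₁ * w) / N, (u₁ * t - u₀ * w) / N)
  refine ⟨point √(N - t ^ 2), point (-√(N - t ^ 2)), fun y₀ y₁ hy ht => ?_⟩
  -- `w` is the coordinate of `y` along the line; Lagrange's identity gives `t ^ 2 + w ^ 2 = N`.
  set w := u₁ * y₀ - u₀ * y₁
  have hw : |w| = √(N - t ^ 2) := by
    rw [← Real.sqrt_sq_eq_abs, ← ht]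
    congr 1
    linear_combination N * hy
  have hy_eq : (y₀, y₁) = point w := by
    simp only [point, Prod.mk.injEq, ← ht]
    constructor <;> field_simp <;> ring
  rcases (abs_eq (Real.sqrt_nonneg _)).mp hw with h | h <;> rw [h] at hy_eq
  exacts [Or.inl hy_eq, Or.inr hy_eq]

theorem nonneg_mul_iff_of_mul_add_mul_eq_zero {u₁ u₂ y₁ y₂ : ℝ} (hu : u₁ ≠ 0 ∨ u₂ ≠ 0)
    (hy : ¬(y₁ = 0 ∧ y₂ = 0)) (h : u₁ * y₁ + u₂ * y₂ = 0) : 0 ≤ y₁ * y₂ ↔ u₁ * u₂ ≤ 0 := by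
  have h₁ : u₁ * u₂ * (y₁ * y₂) = -(u₂ * y₂) ^ 2 := by linear_combination u₂ * y₂ * h
  have h₂ : u₁ * u₂ * (y₁ * y₂) = -(u₁ * y₁) ^ 2 := by linear_combination u₁ * y₁ * h
  constructor
  · intro hy₁₂
    by_contra! hu₁₂
    obtain ⟨hu₁, hu₂⟩ : u₁ ≠ 0 ∧ u₂ ≠ 0 := by
      constructor <;> rintro rfl <;> simp at hu₁₂
    have : u₂ * y₂ = 0 := by nlinarith
    have : u₁ * y₁ = 0 := by nlinarith
    simp_all
  · intro hu₁₂
    rcases hu₁₂.lt_or_eq with hlt | heq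
    · nlinarith
    · rcases mul_eq_zero.mp heq with h0 | h0 <;> simp_all

theorem exists_forall_circleColoring_ne {u₀ u₁ : ℝ} (hu : u₀ ≠ 0 ∨ u₁ ≠ 0) (t : ℝ) :
    ∃ c ≤ 2, ∀ y₀ y₁ : ℝ, y₀ ^ 2 + y₁ ^ 2 = 1 → u₀ * y₀ + u₁ * y₁ = t →
      circleColoring y₀ y₁ ≠ c := by
  obtain ⟨p, q, hpq⟩ := circle_inter_line_eq_or_eq hu t
  obtain ⟨c, hc, hcp, hcq⟩ : ∃ c ≤ 2, c ≠ circleColoring p.1 p.2 ∧ c ≠ circleColoring q.1 q.2 := by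
    by_cases h0 : 0 ≠ circleColoring p.1 p.2 ∧ 0 ≠ circleColoring q.1 q.2
    · exact ⟨0, by omega, h0⟩
    by_cases h1 : 1 ≠ circleColoring p.1 p.2 ∧ 1 ≠ circleColoring q.1 q.2
    · exact ⟨1, by omega, h1⟩
    exact ⟨2, le_rfl, by omega, by omega⟩
  refine ⟨c, hc, fun y₀ y₁ hy ht => ?_⟩
  rcases hpq y₀ y₁ hy ht with rfl | rfl
  exacts [hcp.symm, hcq.symm]

theorem exists_forall_pairColoring_add_two_ne_of_low_eq_zero {k : ℕ} {u : ℕ → ℝ}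
    (hlow : ∀ j ≤ k, u j = 0) (htop : u (k + 1) ≠ 0 ∨ u (k + 2) ≠ 0) (t : ℝ) :
    ∃ c ≤ k + 3, ∀ y : ℕ → ℝ, ∑ j ∈ range (k + 3), u j * y j = t → pairColoring (k + 2) y ≠ c := by
  have hsum (y : ℕ → ℝ) :
      ∑ j ∈ range (k + 3), u j * y j = u (k + 1) * y (k + 1) + u (k + 2) * y (k + 2) := by
    rw [sum_range_succ, sum_range_succ, sum_eq_zero fun j hj => by
      rw [hlow j (Nat.lt_succ_iff.mp (mem_range.mp hj)), zero_mul], zero_add]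
  by_cases ht : t = 0
  · -- For `t = 0` the sign of `y (k + 1) * y (k + 2)` is that of `-u (k + 1) * u (k + 2)`.
    refine ⟨if u (k + 1) * u (k + 2) ≤ 0 then k + 3 else k + 2, by split_ifs <;> omega,
      fun y hy => ?_⟩
    rw [hsum, ht] at hy
    by_cases hy0 : y (k + 1) = 0 ∧ y (k + 2) = 0
    · have := pairColoring_le k y
      rw [pairColoring_add_two_of_top_eq_zero hy0]
      split_ifs <;> omega
    · have hsign := nonneg_mul_iff_of_mul_add_mul_eq_zero htop hy0 hy
      rw [pairColoring_add_two_of_top_ne_zero hy0]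
      split_ifs <;> simp_all
  · refine ⟨0, by omega, fun y hy => ?_⟩
    have hy0 : ¬(y (k + 1) = 0 ∧ y (k + 2) = 0) := by
      rintro ⟨h₁, h₂⟩
      rw [hsum, h₁, h₂] at hy
      simp_all
    rw [pairColoring_add_two_of_top_ne_zero hy0]
    split_ifs <;> omega

theorem exists_forall_pairColoring_ne : ∀ (k : ℕ) (u : ℕ → ℝ) (t : ℝ), (∃ j ≤ k, u j ≠ 0) →
    ∃ c ≤ k + 1, ∀ y : ℕ → ℝ, ∑ j ∈ range (k + 1), y j ^ 2 = 1 →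
      ∑ j ∈ range (k + 1), u j * y j = t → pairColoring k y ≠ c
  | 0, u, t, hu => by
    obtain ⟨j, hj, hu0⟩ := hu
    obtain rfl : j = 0 := by omega
    refine ⟨if 0 < t * u 0 then 1 else 0, by split_ifs <;> omega, fun y hy ht => ?_⟩
    simp only [zero_add, sum_range_one] at hy ht
    have hsign : t * u 0 = u 0 ^ 2 * y 0 := by rw [← ht]; ring
    have hy0 : y 0 ≠ 0 := by rintro h; simp [h] at hy
    rw [pairColoring, hsign]
    rcases hy0.lt_or_gt with hneg | hpos
    · have : u 0 ^ 2 * y 0 < 0 := mul_neg_of_pos_of_neg (by positivity) hneg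
      simp [not_lt.mpr hneg.le, not_lt.mpr this.le]
    · have : 0 < u 0 ^ 2 * y 0 := mul_pos (by positivity) hpos
      simp [hpos, this]
  | 1, u, t, hu => by
    have hu' : u 0 ≠ 0 ∨ u 1 ≠ 0 := by
      obtain ⟨j, hj, hu0⟩ := hu
      interval_cases j <;> simp [hu0]
    obtain ⟨c, hc, hmiss⟩ := exists_forall_circleColoring_ne hu' t
    refine ⟨c, hc, fun y hy ht => ?_⟩
    simp only [sum_range_succ, sum_range_zero, zero_add] at hy ht
    exact hmiss (y 0) (y 1) hy ht
  | k + 2, u, t, hu => by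
    by_cases hlow : ∃ j ≤ k, u j ≠ 0
    · obtain ⟨c, hc, hmiss⟩ := exists_forall_pairColoring_ne k u t hlow
      refine ⟨c, by omega, fun y hy ht => ?_⟩
      by_cases hy0 : y (k + 1) = 0 ∧ y (k + 2) = 0
      · rw [pairColoring_add_two_of_top_eq_zero hy0]
        simp only [sum_range_succ _ (k + 2), sum_range_succ _ (k + 1), hy0.1, hy0.2] at hy ht
        exact hmiss y (by simpa using hy) (by simpa using ht)
      · rw [pairColoring_add_two_of_top_ne_zero hy0]
        split_ifs <;> omega
    · push Not at hlow
      have htop : u (k + 1) ≠ 0 ∨ u (k + 2) ≠ 0 := by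
        obtain ⟨j, hj, hu0⟩ := hu
        have : j = k + 1 ∨ j = k + 2 := by
          by_contra! h; exact hu0 (hlow j (by omega))
        rcases this with rfl | rfl <;> simp [hu0]
      obtain ⟨c, hc, hmiss⟩ := exists_forall_pairColoring_add_two_ne_of_low_eq_zero hlow htop t
      exact ⟨c, hc, fun y _ ht => hmiss y ht⟩

theorem exists_pairColoring_eq : ∀ (k c : ℕ), c ≤ k + 1 → ∃ y : ℕ → ℝ,
    ∑ j ∈ range (k + 1), y j ^ 2 = 1 ∧ (∀ j, k < j → y j = 0) ∧ pairColoring k y = c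
  | 0, c, hc => by
    obtain ⟨a, ha, rfl⟩ : ∃ a : ℝ, a ^ 2 = 1 ∧ (if 0 < a then 0 else 1) = c := by
      rcases (show c = 0 ∨ c = 1 by omega) with rfl | rfl
      exacts [⟨1, by norm_num⟩, ⟨-1, by norm_num⟩]
    refine ⟨fun j => if j = 0 then a else 0, by simpa using ha, fun j hj => ?_,
      by simp [pairColoring]⟩
    simp [hj.ne']
  | 1, c, hc => by
    obtain ⟨a, b, hab, rfl⟩ : ∃ a b : ℝ, a ^ 2 + b ^ 2 = 1 ∧ circleColoring a b = c := by
      rcases (show c = 0 ∨ c = 1 ∨ c = 2 by omega) with rfl | rfl | rfl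
      · exact ⟨1, 0, by norm_num [circleColoring]⟩
      · exact ⟨0, 1, by norm_num [circleColoring]⟩
      · exact ⟨3 / 5, -4 / 5, by norm_num [circleColoring]⟩
    refine ⟨fun j => if j = 0 then a else if j = 1 then b else 0,
      by simpa [sum_range_succ] using hab, fun j hj => ?_, by simp [pairColoring]⟩
    simp [show j ≠ 0 by omega, show j ≠ 1 by omega]
  | k + 2, c, hc => by
    by_cases hck : c ≤ k + 1
    · obtain ⟨y, hy, hsupp, rfl⟩ := exists_pairColoring_eq k c hck
      have hy0 : y (k + 1) = 0 ∧ y (k + 2) = 0 := ⟨hsupp _ (by omega), hsupp _ (by omega)⟩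
      refine ⟨y, by simp [sum_range_succ _ (k + 2), sum_range_succ _ (k + 1), hy0, hy],
        fun j hj => hsupp j (by omega), pairColoring_add_two_of_top_eq_zero hy0⟩
    obtain ⟨a, b, hab, hab0, rfl⟩ : ∃ a b : ℝ, a ^ 2 + b ^ 2 = 1 ∧ ¬(a = 0 ∧ b = 0) ∧
        (if 0 ≤ a * b then k + 2 else k + 3) = c := by
      rcases (show c = k + 2 ∨ c = k + 3 by omega) with rfl | rfl
      · exact ⟨0, 1, by norm_num⟩
      · exact ⟨3 / 5, -4 / 5, by norm_num⟩
    let y : ℕ → ℝ := fun j => if j = k + 1 then a else if j = k + 2 then b else 0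
    have hy1 : y (k + 1) = a := by simp [y]
    have hy2 : y (k + 2) = b := by simp [y]
    refine ⟨y, ?_, fun j hj => ?_, ?_⟩
    · rw [sum_range_succ, sum_range_succ, sum_eq_zero fun j hj => ?_, hy1, hy2, zero_add, hab]
      simp [y, (mem_range.mp hj).ne, show j ≠ k + 2 by simp at hj; omega]
    · simp [y, show j ≠ k + 1 by omega, show j ≠ k + 2 by omega]
    · rw [pairColoring_add_two_of_top_ne_zero (by rwa [hy1, hy2]), hy1, hy2]

theorem exists_ne_zero_forall_inner_eq_of_direction_ne_top {E : Type*} [NormedAddCommGroup E]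
    [InnerProductSpace ℝ E] [FiniteDimensional ℝ E] {H : AffineSubspace ℝ E}
    (hH : H.direction ≠ ⊤) {x₀ : E} (hx₀ : x₀ ∈ H) :
    ∃ u ≠ (0 : E), ∀ p ∈ H, inner ℝ u p = inner ℝ u x₀ := by
  obtain ⟨u, hu, hu0⟩ := Submodule.exists_mem_ne_zero_of_ne_bot
    (mt Submodule.orthogonal_eq_bot_iff.mp hH)
  refine ⟨u, hu0, fun p hp => ?_⟩
  have h := Submodule.inner_right_of_mem_orthogonal (AffineSubspace.vsub_mem_direction hp hx₀) hu
  rw [vsub_eq_sub, inner_sub_left] at h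
  linarith [real_inner_comm u p, real_inner_comm u x₀]

section Sphere

variable {n : ℕ}

noncomputable def coords (x : EuclideanSpace ℝ (Fin (n + 1))) : ℕ → ℝ :=
  fun j => if h : j < n + 1 then x ⟨j, h⟩ else 0

theorem coords_val (x : EuclideanSpace ℝ (Fin (n + 1))) (i : Fin (n + 1)) : coords x i = x i := by
  simp [coords, i.isLt]

theorem sum_range_coords_mul (x y : EuclideanSpace ℝ (Fin (n + 1))) :
    ∑ j ∈ range (n + 1), coords x j * coords y j = inner ℝ x y := by
  rw [← Fin.sum_univ_eq_sum_range (fun j => coords x j * coords y j), PiLp.inner_apply]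
  simp [coords_val, mul_comm]

theorem sum_range_coords_sq (x : EuclideanSpace ℝ (Fin (n + 1))) :
    ∑ j ∈ range (n + 1), coords x j ^ 2 = ‖x‖ ^ 2 := by
  simp only [sq (coords x _), sum_range_coords_mul, real_inner_self_eq_norm_sq]

variable (n) in
noncomputable def sphereColoring (p : Metric.sphere (0 : EuclideanSpace ℝ (Fin (n + 1))) 1) :
    Fin (n + 2) :=
  ⟨pairColoring n (coords (p : EuclideanSpace ℝ (Fin (n + 1)))),
    Nat.lt_succ_of_le (pairColoring_le n _)⟩

theorem sphereColoring_surjective : Function.Surjective (sphereColoring n) := by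
  intro c
  obtain ⟨y, hy, hsupp, hc⟩ := exists_pairColoring_eq n c (Nat.le_of_lt_succ c.isLt)
  let x : EuclideanSpace ℝ (Fin (n + 1)) := WithLp.toLp 2 fun i => y i
  have hx : coords x = y := funext fun j => by
    by_cases hj : j < n + 1
    · simp [coords, hj, x]
    · simp [coords, hj, hsupp j (by omega)]
  have hx1 : x ∈ Metric.sphere 0 1 := by
    rw [mem_sphere_zero_iff_norm, ← pow_eq_one_iff_of_nonneg (norm_nonneg x) two_ne_zero,
      ← sum_range_coords_sq, hx, hy]
  exact ⟨⟨x, hx1⟩, Fin.ext (by simpa [sphereColoring, hx] using hc)⟩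

theorem ncard_image_sphereColoring_le {H : AffineSubspace ℝ (EuclideanSpace ℝ (Fin (n + 1)))}
    (hH : Module.finrank ℝ H.direction = n) {x₀ : EuclideanSpace ℝ (Fin (n + 1))} (hx₀ : x₀ ∈ H) :
    (sphereColoring n '' {p | (p : EuclideanSpace ℝ (Fin (n + 1))) ∈ H}).ncard ≤ n + 1 := by
  have hdir : H.direction ≠ ⊤ := fun h => by
    rw [h, finrank_top, finrank_euclideanSpace_fin] at hH
    omega
  obtain ⟨u, hu0, hu⟩ := exists_ne_zero_forall_inner_eq_of_direction_ne_top hdir hx₀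
  have hu' : ∃ j ≤ n, coords u j ≠ 0 := by
    by_contra! h
    exact hu0 (PiLp.ext fun i => by simpa [coords_val] using h i (Nat.le_of_lt_succ i.isLt))
  obtain ⟨c, hc, hmiss⟩ := exists_forall_pairColoring_ne n (coords u) (inner ℝ u x₀) hu'
  have hmiss' : (⟨c, Nat.lt_succ_of_le hc⟩ : Fin (n + 2)) ∉
      sphereColoring n '' {p | (p : EuclideanSpace ℝ (Fin (n + 1))) ∈ H} := by
    rintro ⟨p, hp, hpc⟩
    refine hmiss _ ?_ ?_ (congrArg Fin.val hpc)
    · rw [sum_range_coords_sq, mem_sphere_zero_iff_norm.mp p.2, one_pow]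
    · rw [sum_range_coords_mul, hu _ hp]
  have := Set.ncard_lt_card ((Set.ne_univ_iff_exists_notMem _).mpr ⟨_, hmiss'⟩)
  rwa [Nat.card_fin, Nat.lt_succ_iff] at this

end Sphere

theorem sharp_n_plus_two_coloring_general (n : ℕ) :
    ∃ Γ : (Metric.sphere (0 : EuclideanSpace ℝ (Fin (n + 1))) 1) → Fin (n + 2),
      Function.Surjective Γ ∧
      ∀ H : AffineSubspace ℝ (EuclideanSpace ℝ (Fin (n + 1))),
        Module.finrank ℝ H.direction = n → (∃ x ∈ H, ‖x‖ < 1) →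
        (Γ '' {p | (p : EuclideanSpace ℝ (Fin (n + 1))) ∈ H}).ncard ≤ n + 1 :=
  ⟨sphereColoring n, sphereColoring_surjective, fun _ hH ⟨_, hx₀, _⟩ =>
    ncard_image_sphereColoring_le hH hx₀⟩

/-- Sharpness: for `n ≥ 2` there is a full `(n+2)`-coloring of the standard `n`-sphere in
which every `(n-1)`-sphere contains at most `n + 1` colors. -/
theorem sharp_n_plus_two_coloring (n : ℕ) (hn : 2 ≤ n) :
    ∃ Γ : (Metric.sphere (0 : EuclideanSpace ℝ (Fin (n + 1))) 1) → Fin (n + 2),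
      Function.Surjective Γ ∧
      ∀ H : AffineSubspace ℝ (EuclideanSpace ℝ (Fin (n + 1))),
        Module.finrank ℝ H.direction = n → (∃ x ∈ H, ‖x‖ < 1) →
        (Γ '' {p | (p : EuclideanSpace ℝ (Fin (n + 1))) ∈ H}).ncard ≤ n + 1 :=
  sharp_n_plus_two_coloring_general n
end

section
/- Let n ≥ 2 and k ≥ n + 3. There exists a full k-coloring Γ of the standard n-sphere S^n such that every (n−1)-sphere in S^n contains at most n + 2 colors; that is, for every affine hyperplane H of ℝ^{n+1} whose distance from the origin is strictly less than 1, the image Γ(S^n ∩ H) has at most n + 2 elements. -/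
/-!
Choose `k` points of the sphere in general position, i.e. at most `r + 1` of them on any
`r`-dimensional affine subspace with `r ≤ n`; give them the `k` distinct colours and colour the
rest of the sphere with one of these colours. A hyperplane then contains at most `n + 1` of the
points, hence meets at most `n + 2` colours.

The points are chosen one at a time: the next point only has to avoid the finitely many proper
affine subspaces spanned by the previous ones. This is possible because every hyperplane section
of the sphere is nowhere dense in it: along a great circle `t ↦ cos t • x + sin t • v` an affine
function is `t ↦ α cos t + β sin t`, which is analytic and hence not locally constant unless
`α = β = 0`.
-/

open Module Finset Filter Topology Real Metric
open scoped RealInnerProductSpace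

section GeneralPosition

variable (k : Type*) {V : Type*} [Field k] [AddCommGroup V] [Module k V]

def InGeneralPosition (T : Finset V) : Prop :=
  ∀ A : AffineSubspace k V, finrank k A.direction < finrank k V →
    ((A : Set V) ∩ T).ncard ≤ finrank k A.direction + 1

variable {k} [FiniteDimensional k V] {T : Finset V}

lemma InGeneralPosition.affineSpan_inter_eq (hT : InGeneralPosition k T)
    {A : AffineSubspace k V} (hA : finrank k A.direction < finrank k V)
    (hcard : finrank k A.direction + 1 ≤ ((A : Set V) ∩ T).ncard) :
    affineSpan k ((A : Set V) ∩ T) = A := by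
  set B := affineSpan k ((A : Set V) ∩ T)
  have hBA : B ≤ A := affineSpan_le.mpr Set.inter_subset_left
  have hdir : B.direction ≤ A.direction := AffineSubspace.direction_le hBA
  have hrank : finrank k B.direction = finrank k A.direction := by
    refine le_antisymm (Submodule.finrank_mono hdir) (not_lt.mp fun hlt => ?_)
    have hsub : (A : Set V) ∩ T ⊆ (B : Set V) ∩ T :=
      Set.subset_inter (subset_affineSpan k _) Set.inter_subset_right
    have := Set.ncard_le_ncard hsub (T.finite_toSet.inter_of_right _)
    have := hT B (hlt.trans hA)
    omega
  have hne : ((A : Set V) ∩ T).Nonempty := Set.nonempty_of_ncard_ne_zero (by omega)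
  exact AffineSubspace.eq_of_direction_eq_of_nonempty_of_le
    (Submodule.eq_of_le_of_finrank_eq hdir hrank) (hne.affineSpan k) hBA

lemma InGeneralPosition.insert [DecidableEq V] (hT : InGeneralPosition k T) {p : V}
    (hp : ∀ S ⊆ (T : Set V), affineSpan k S ≠ ⊤ → p ∉ affineSpan k S) :
    InGeneralPosition k (insert p T) := by
  intro A hA
  rw [Finset.coe_insert]
  by_cases hpA : p ∈ A
  · have hA_ne_top : A ≠ ⊤ := by
      rintro rfl
      rw [AffineSubspace.direction_top, finrank_top] at hA
      exact lt_irrefl _ hA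
    have hle : ((A : Set V) ∩ T).ncard ≤ finrank k A.direction := by
      by_contra! hlt
      have hspan := hT.affineSpan_inter_eq hA hlt
      exact hp _ Set.inter_subset_right (by rwa [hspan]) (by rwa [hspan])
    rw [Set.inter_insert_of_mem hpA]
    exact (Set.ncard_insert_le _ _).trans (by omega)
  · rw [Set.inter_insert_of_notMem hpA]
    exact hT A hA

end GeneralPosition

lemma frequently_mul_cos_add_mul_sin_ne {α β : ℝ} (h : α ≠ 0 ∨ β ≠ 0) (b : ℝ) :
    ∃ᶠ t in 𝓝 0, α * cos t + β * sin t ≠ b := by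
  intro hev
  have hf : AnalyticOnNhd ℝ (fun t => α * cos t + β * sin t) Set.univ :=
    (analyticOnNhd_const.mul analyticOnNhd_cos).add (analyticOnNhd_const.mul analyticOnNhd_sin)
  have heq := hf.eqOn_of_preconnected_of_eventuallyEq analyticOnNhd_const isPreconnected_univ
    (Set.mem_univ 0) (hev.mono fun _ => not_not.mp)
  have h0 := heq (Set.mem_univ 0)
  have hπ := heq (Set.mem_univ π)
  have hπ2 := heq (Set.mem_univ (π / 2))
  simp only [cos_zero, sin_zero, cos_pi, sin_pi, cos_pi_div_two, sin_pi_div_two] at h0 hπ hπ2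
  rcases h with h | h <;> apply h <;> linarith

section Sphere

variable {E : Type*} [NormedAddCommGroup E] [InnerProductSpace ℝ E] [FiniteDimensional ℝ E]

lemma exists_norm_eq_one_inner_eq_zero (h2 : 2 ≤ finrank ℝ E) (x : E) :
    ∃ v : E, ‖v‖ = 1 ∧ ⟪x, v⟫ = 0 := by
  have hx : finrank ℝ (ℝ ∙ x) ≤ 1 := (finrank_span_le_card {x}).trans (by simp)
  have hsum := (ℝ ∙ x).finrank_add_finrank_orthogonal
  obtain ⟨w, hw, hw0⟩ := (ℝ ∙ x)ᗮ.exists_mem_ne_zero_of_ne_bot fun h => by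
    rw [h, finrank_bot] at hsum
    omega
  refine ⟨‖w‖⁻¹ • w, norm_smul_inv_norm hw0, ?_⟩
  rw [inner_smul_right, Submodule.mem_orthogonal_singleton_iff_inner_right.mp hw, mul_zero]

lemma dense_sphere_inner_ne (h2 : 2 ≤ finrank ℝ E) {a : E} (ha : a ≠ 0) (b : ℝ) :
    Dense {x : sphere (0 : E) 1 | ⟪a, x⟫ ≠ b} := by
  intro x
  rw [mem_closure_iff_frequently]
  have hx : ‖(x : E)‖ = 1 := by simp
  obtain ⟨v, hv, hxv, hav⟩ :
      ∃ v : E, ‖v‖ = 1 ∧ ⟪(x : E), v⟫ = 0 ∧ (⟪a, x⟫ ≠ 0 ∨ ⟪a, v⟫ ≠ 0) := by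
    by_cases hax : ⟪a, x⟫ = 0
    · refine ⟨‖a‖⁻¹ • a, norm_smul_inv_norm ha, ?_, Or.inr ?_⟩
      · rw [inner_smul_right, real_inner_comm, hax, mul_zero]
      · have := norm_pos_iff.mpr ha
        rw [inner_smul_right, real_inner_self_eq_norm_sq]
        positivity
    · obtain ⟨v, hv, hxv⟩ := exists_norm_eq_one_inner_eq_zero h2 (x : E)
      exact ⟨v, hv, hxv, Or.inl hax⟩
  let γ : ℝ → sphere (0 : E) 1 := fun t =>
    ⟨cos t • (x : E) + sin t • v, by
      rw [mem_sphere_zero_iff_norm, ← pow_eq_one_iff_of_nonneg (norm_nonneg _) two_ne_zero,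
        norm_add_sq_real]
      simp [norm_smul, inner_smul_left, inner_smul_right, hx, hv, hxv, cos_sq_add_sin_sq]⟩
  have hγ : Tendsto γ (𝓝 0) (𝓝 x) := by
    have : Continuous γ := by fun_prop
    simpa [γ] using this.tendsto 0
  refine hγ.frequently ((frequently_mul_cos_add_mul_sin_ne hav b).mono fun t ht => ?_)
  simpa [γ, inner_add_right, inner_smul_right, mul_comm] using ht

lemma AffineSubspace.exists_inner_eq_of_ne_top [Nontrivial E] {A : AffineSubspace ℝ E}
    (hA : A ≠ ⊤) : ∃ a : E, a ≠ 0 ∧ ∃ b : ℝ, ∀ x ∈ A, ⟪a, x⟫ = b := by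
  rcases (A : Set E).eq_empty_or_nonempty with hA₀ | ⟨p, hp⟩
  · obtain ⟨a, ha⟩ := exists_ne (0 : E)
    exact ⟨a, ha, 0, fun x hx => (hA₀.subset hx).elim⟩
  · have hdir : A.directionᗮ ≠ ⊥ := fun h =>
      hA ((AffineSubspace.direction_eq_top_iff_of_nonempty ⟨p, hp⟩).mp
        (Submodule.orthogonal_eq_bot_iff.mp h))
    obtain ⟨a, haA, ha⟩ := A.directionᗮ.exists_mem_ne_zero_of_ne_bot hdir
    refine ⟨a, ha, ⟪a, p⟫, fun x hx => ?_⟩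
    have h0 := Submodule.inner_left_of_mem_orthogonal (AffineSubspace.vsub_mem_direction hx hp) haA
    rwa [vsub_eq_sub, inner_sub_right, sub_eq_zero] at h0

lemma exists_mem_sphere_forall_notMem (h2 : 2 ≤ finrank ℝ E)
    {𝒜 : Set (AffineSubspace ℝ E)} (h𝒜 : 𝒜.Finite) (hA : ∀ A ∈ 𝒜, A ≠ ⊤) :
    ∃ x ∈ sphere (0 : E) 1, ∀ A ∈ 𝒜, x ∉ A := by
  have : Nontrivial E := Module.nontrivial_of_finrank_pos (R := ℝ) (by omega)
  have hopen (A : AffineSubspace ℝ E) : IsOpen {x : sphere (0 : E) 1 | (x : E) ∉ A} :=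
    (AffineSubspace.closed_of_finiteDimensional A).isOpen_compl.preimage continuous_subtype_val
  have hdense (A : AffineSubspace ℝ E) (hA : A ≠ ⊤) :
      Dense {x : sphere (0 : E) 1 | (x : E) ∉ A} := by
    obtain ⟨a, ha, b, hab⟩ := A.exists_inner_eq_of_ne_top hA
    exact (dense_sphere_inner_ne h2 ha b).mono fun x (hx : ⟪a, x⟫ ≠ b) hxA => hx (hab x hxA)
  have : Nonempty (sphere (0 : E) 1) := (NormedSpace.sphere_nonempty.mpr zero_le_one).to_subtype
  obtain ⟨x, hx⟩ := (dense_biInter_of_isOpen (fun A _ => hopen A) h𝒜.countable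
    fun A h => hdense A (hA A h)).nonempty
  exact ⟨x, x.2, Set.mem_iInter₂.mp hx⟩

lemma exists_finset_sphere_inGeneralPosition (h2 : 2 ≤ finrank ℝ E) (m : ℕ) :
    ∃ T : Finset E, #T = m ∧ (T : Set E) ⊆ sphere 0 1 ∧ InGeneralPosition ℝ T := by
  classical
  induction m with
  | zero => exact ⟨∅, rfl, by simp, fun A _ => by simp⟩
  | succ m ih =>
    obtain ⟨T, rfl, hTS, hT⟩ := ih
    let 𝒜 := affineSpan ℝ '' {S | S ⊆ (T : Set E) ∧ affineSpan ℝ S ≠ ⊤}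
    have h𝒜 : 𝒜.Finite := (T.finite_toSet.finite_subsets.subset fun S hS => hS.1).image _
    obtain ⟨p, hpS, hp⟩ := exists_mem_sphere_forall_notMem h2 h𝒜 (by
      rintro _ ⟨S, hS, rfl⟩
      exact hS.2)
    have hp' : ∀ S ⊆ (T : Set E), affineSpan ℝ S ≠ ⊤ → p ∉ affineSpan ℝ S :=
      fun S hST hS => hp _ ⟨S, ⟨hST, hS⟩, rfl⟩
    have hpT : p ∉ T := by
      have : Nontrivial E := Module.nontrivial_of_finrank_pos (R := ℝ) (by omega)
      intro hpT
      refine hp' {p} (by simpa using hpT) ?_ (mem_affineSpan ℝ rfl)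
      rw [Ne, ← AffineSubspace.direction_eq_top_iff_of_nonempty
        ((Set.singleton_nonempty p).affineSpan ℝ), direction_affineSpan, vectorSpan_singleton]
      exact bot_ne_top
    exact ⟨insert p T, card_insert_of_notMem hpT, by simpa using Set.insert_subset hpS hTS,
      hT.insert hp'⟩

end Sphere

lemma exists_coloring_of_finset {X : Type*} (T : Finset X) (hT : T.Nonempty) :
    ∃ Γ : X → Fin #T, (∀ j, ∃ x ∈ T, Γ x = j) ∧
      ∀ Y : Set X, (Γ '' Y).ncard ≤ (Y ∩ T).ncard + 1 := by
  classical
  let c₀ : Fin #T := ⟨0, hT.card_pos⟩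
  let Γ : X → Fin #T := fun x => if h : x ∈ T then T.equivFin ⟨x, h⟩ else c₀
  refine ⟨Γ, fun j => ⟨T.equivFin.symm j, (T.equivFin.symm j).2, by simp [Γ]⟩, fun Y => ?_⟩
  have hsub : Γ '' Y ⊆ insert c₀ (Γ '' (Y ∩ T)) := by
    rintro _ ⟨x, hx, rfl⟩
    by_cases hxT : x ∈ T
    · exact Or.inr ⟨x, ⟨hx, hxT⟩, rfl⟩
    · exact Or.inl (dif_neg hxT)
  calc (Γ '' Y).ncard ≤ (insert c₀ (Γ '' (Y ∩ T))).ncard := Set.ncard_le_ncard hsub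
    _ ≤ (Γ '' (Y ∩ T)).ncard + 1 := Set.ncard_insert_le _ _
    _ ≤ (Y ∩ T).ncard + 1 := by
      gcongr
      exact Set.ncard_image_le (T.finite_toSet.inter_of_right _)

/-- Sharpness: for `n ≥ 2` and any `k ≥ n + 3` there is a full `k`-coloring of the standard
`n`-sphere in which every `(n-1)`-sphere contains at most `n + 2` colors. -/
theorem sharp_k_coloring (n k : ℕ) (hn : 2 ≤ n) (hk : n + 3 ≤ k) :
    ∃ Γ : (Metric.sphere (0 : EuclideanSpace ℝ (Fin (n + 1))) 1) → Fin k,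
      Function.Surjective Γ ∧
      ∀ H : AffineSubspace ℝ (EuclideanSpace ℝ (Fin (n + 1))),
        Module.finrank ℝ H.direction = n → (∃ x ∈ H, ‖x‖ < 1) →
        (Γ '' {p | (p : EuclideanSpace ℝ (Fin (n + 1))) ∈ H}).ncard ≤ n + 2 := by
  have hE : finrank ℝ (EuclideanSpace ℝ (Fin (n + 1))) = n + 1 := finrank_euclideanSpace_fin
  obtain ⟨T, rfl, hTS, hT⟩ :=
    exists_finset_sphere_inGeneralPosition (E := EuclideanSpace ℝ (Fin (n + 1))) (by omega) k
  obtain ⟨Γ, hΓT, hΓ⟩ := exists_coloring_of_finset T (card_pos.mp (by omega))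
  refine ⟨fun x => Γ x, fun j => ?_, fun H hH _ => ?_⟩
  · obtain ⟨x, hx, rfl⟩ := hΓT j
    exact ⟨⟨x, hTS hx⟩, rfl⟩
  · have hHT : ((H : Set (EuclideanSpace ℝ (Fin (n + 1)))) ∩ T).ncard ≤ n + 1 := by
      have := hT H (by omega)
      omega
    calc _ ≤ (Γ '' H).ncard := Set.ncard_le_ncard (by rintro _ ⟨x, hx, rfl⟩; exact ⟨x, hx, rfl⟩)
      _ ≤ n + 2 := by
        have := hΓ H
        omega
end

section
/- Let C₁ and C₂ be two circles in the standard 2-sphere S² that intersect transversally, i.e., C₁ ∩ C₂ consists of exactly two points. Then there exists a surjective map Γ : C₁ ∪ C₂ → {1, 2, 3, 4, 5} such that for every circle C in S², the image Γ(C ∩ (C₁ ∪ C₂)) has at most 3 elements. -/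
/-!
Invert at `p` with radius `1`. The sphere becomes a plane, the circles `C₁` and `C₂` become two
lines of it through the image `q'` of `q`, and every plane missing `p` becomes a sphere. Put
`L z = log |z' q'|` for the image `z'` of `z`; it takes every real value on each `Cᵢ \ {p, q}`.
If a circle `C` missing `p` meets `C₁` in `a, b` and `C₂` in `u, v`, the power of `q'` with
respect to the image sphere of `C` gives `L a + L b = L u + L v`. Color `C₁` by `0, 1, 2`
according as `L ∈ ℤ`, `L ∈ ℤ + 1/2` or neither, `C₂` by `3, 4, 2` according as `L ∈ ℤ + 1/4`,
`L ∈ ℤ + 3/4` or neither, and `p, q` by `2`. Reading `L a + L b = L u + L v` modulo `1` rules out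
four distinct colors on `C`.
-/

open Module

theorem Set.exists_subset_pair {α : Type*} [Nonempty α] {T : Set α}
    (hT : ∀ x ∈ T, ∀ y ∈ T, ∀ z ∈ T, x = y ∨ x = z ∨ y = z) :
    ∃ a b, T ⊆ {a, b} ∧ (a ≠ b → a ∈ T ∧ b ∈ T) := by
  rcases T.eq_empty_or_nonempty with rfl | ⟨a, ha⟩
  · exact ⟨Classical.arbitrary α, _, Set.empty_subset _, fun h => (h rfl).elim⟩
  by_cases h : ∃ b ∈ T, b ≠ a
  · obtain ⟨b, hb, hba⟩ := h
    refine ⟨a, b, fun z hz => ?_, fun _ => ⟨ha, hb⟩⟩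
    rcases hT a ha b hb z hz with h | h | h
    exacts [(hba h.symm).elim, Or.inl h.symm, Or.inr h.symm]
  · push Not at h
    exact ⟨a, a, fun z hz => Or.inl (h z hz), fun h => (h rfl).elim⟩

theorem Set.ncard_le_card_toFinset {α : Type*} [DecidableEq α] {s : Set α} {l : List α}
    (hs : ∀ x ∈ s, x ∈ l) : s.ncard ≤ l.toFinset.card := by
  rw [← Set.ncard_coe_finset]
  exact Set.ncard_le_ncard (fun x hx => by simpa using hs x hx) (Finset.finite_toSet _)

theorem Set.ncard_le_length {α : Type*} {s : Set α} {l : List α} (hs : ∀ x ∈ s, x ∈ l) :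
    s.ncard ≤ l.length := by
  classical
  exact (Set.ncard_le_card_toFinset hs).trans (List.toFinset_card_le l)

theorem Set.ncard_lt_length {α : Type*} {s : Set α} {l : List α} (hs : ∀ x ∈ s, x ∈ l)
    (hl : ¬ l.Nodup) : s.ncard < l.length := by
  classical
  exact (Set.ncard_le_card_toFinset hs).trans_lt <|
    (List.toFinset_card_le l).lt_of_ne (mt Multiset.toFinset_card_eq_card_iff_nodup.1 hl)

-- `⊤` marks `t ∉ ℤ / 4`; being absorbing, it makes the residue additive as soon as one summand
-- is a quarter-integer.
open Classical in
noncomputable def quarterResidue (t : ℝ) : WithTop (ZMod 4) :=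
  if h : ∃ m : ℤ, t = m / 4 then ((h.choose : ZMod 4) : WithTop (ZMod 4)) else ⊤

theorem quarterResidue_intCast_div_four (m : ℤ) : quarterResidue (m / 4) = (m : ZMod 4) := by
  have h : ∃ k : ℤ, (m / 4 : ℝ) = k / 4 := ⟨m, rfl⟩
  have hm : h.choose = m := by
    have := h.choose_spec
    exact_mod_cast (div_left_inj' (by norm_num : (4 : ℝ) ≠ 0)).1 this.symm
  rw [quarterResidue, dif_pos h, hm]

theorem quarterResidue_of_not_exists {t : ℝ} (h : ¬ ∃ m : ℤ, t = m / 4) :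
    quarterResidue t = ⊤ := by
  rw [quarterResidue, dif_neg h]

theorem quarterResidue_add_of_ne_top {s : ℝ} (hs : quarterResidue s ≠ ⊤) (t : ℝ) :
    quarterResidue (s + t) = quarterResidue s + quarterResidue t := by
  obtain ⟨m, rfl⟩ : ∃ m : ℤ, s = m / 4 := by
    by_contra h
    exact hs (quarterResidue_of_not_exists h)
  by_cases ht : ∃ k : ℤ, t = k / 4
  · obtain ⟨k, rfl⟩ := ht
    rw [show (m / 4 + k / 4 : ℝ) = ((m + k : ℤ) : ℝ) / 4 by push_cast; ring,
      quarterResidue_intCast_div_four, quarterResidue_intCast_div_four,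
      quarterResidue_intCast_div_four]
    push_cast
    rfl
  · have hst : ¬ ∃ n : ℤ, (m / 4 + t : ℝ) = n / 4 := by
      rintro ⟨n, hn⟩
      exact ht ⟨n - m, by push_cast; linarith⟩
    rw [quarterResidue_of_not_exists ht, quarterResidue_of_not_exists hst, WithTop.add_top]

def firstCircleColor (r : WithTop (ZMod 4)) : Fin 5 :=
  if r = (0 : ZMod 4) then 0 else if r = (2 : ZMod 4) then 1 else 2

def secondCircleColor (r : WithTop (ZMod 4)) : Fin 5 :=
  if r = (1 : ZMod 4) then 3 else if r = (3 : ZMod 4) then 4 else 2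

theorem not_nodup_colors_of_add_eq :
    ∀ a b c d : WithTop (ZMod 4), a + b = c + d →
      ¬ [firstCircleColor a, firstCircleColor b, secondCircleColor c,
        secondCircleColor d].Nodup := by
  decide

theorem quarterResidue_add_of_ne_top_or {s t : ℝ}
    (h : quarterResidue s ≠ ⊤ ∨ quarterResidue t ≠ ⊤) :
    quarterResidue (s + t) = quarterResidue s + quarterResidue t := by
  rcases h with hs | ht
  · exact quarterResidue_add_of_ne_top hs t
  · rw [add_comm s, add_comm (quarterResidue s)]
    exact quarterResidue_add_of_ne_top ht s

theorem not_nodup_colors {s t x y : ℝ} (h : s + t = x + y) :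
    ¬ [firstCircleColor (quarterResidue s), firstCircleColor (quarterResidue t),
      secondCircleColor (quarterResidue x), secondCircleColor (quarterResidue y)].Nodup := by
  by_cases hst : quarterResidue s = ⊤ ∧ quarterResidue t = ⊤
  · simp [hst.1, hst.2]
  by_cases hxy : quarterResidue x = ⊤ ∧ quarterResidue y = ⊤
  · simp [hxy.1, hxy.2]
  apply not_nodup_colors_of_add_eq
  rw [← quarterResidue_add_of_ne_top_or (not_and_or.1 hst),
    ← quarterResidue_add_of_ne_top_or (not_and_or.1 hxy), h]

section Planes

variable {k V P : Type*} [DivisionRing k] [AddCommGroup V] [Module k V] [AddTorsor V P]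
  [FiniteDimensional k V]

theorem Submodule.finrank_inf_eq_one_of_ne {U W : Submodule k V} (hV : finrank k V = 3)
    (hU : finrank k U = 2) (hW : finrank k W = 2) (hUW : U ≠ W) : finrank k ↥(U ⊓ W) = 1 := by
  have hlt : U < U ⊔ W := by
    refine lt_of_le_of_ne le_sup_left fun h => hUW ?_
    exact (Submodule.eq_of_le_of_finrank_eq (h ▸ le_sup_right) (hW.trans hU.symm)).symm
  have hsup := Submodule.finrank_lt_finrank_of_lt hlt
  have hle := Submodule.finrank_le (U ⊔ W)
  have := Submodule.finrank_sup_add_finrank_inf_eq U W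
  omega

theorem AffineSubspace.finrank_direction_inf_eq_one {A A' : AffineSubspace k P}
    (hV : finrank k V = 3) (hA : finrank k A.direction = 2) (hA' : finrank k A'.direction = 2)
    (hne : A ≠ A') {x : P} (hx : x ∈ A) (hx' : x ∈ A') :
    finrank k ↥(A.direction ⊓ A'.direction) = 1 :=
  Submodule.finrank_inf_eq_one_of_ne hV hA hA' fun h =>
    hne (AffineSubspace.ext_of_direction_eq h ⟨x, hx, hx'⟩)

theorem collinear_of_subset_inter {A A' : AffineSubspace k P} (hV : finrank k V = 3)
    (hA : finrank k A.direction = 2) (hA' : finrank k A'.direction = 2) (hne : A ≠ A')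
    {s : Set P} (hs : s ⊆ (A : Set P) ∩ A') : Collinear k s := by
  rcases s.eq_empty_or_nonempty with rfl | ⟨x, hx⟩
  · exact collinear_empty k P
  have hspan : vectorSpan k s ≤ A.direction ⊓ A'.direction :=
    le_inf (vectorSpan_mono k fun y hy => (hs hy).1) (vectorSpan_mono k fun y hy => (hs hy).2)
  rw [collinear_iff_finrank_le_one,
    ← AffineSubspace.finrank_direction_inf_eq_one hV hA hA' hne (hs hx).1 (hs hx).2]
  exact Submodule.finrank_mono hspan

end Planes

section Inversion

open EuclideanGeometry AffineSubspace Metric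

variable {V P : Type*} [NormedAddCommGroup V] [InnerProductSpace ℝ V] [MetricSpace P]
  [NormedAddTorsor V P]

theorem finrank_direction_perpBisector [FiniteDimensional ℝ V] {p₁ p₂ : P} (h : p₁ ≠ p₂) :
    finrank ℝ (perpBisector p₁ p₂).direction + 1 = finrank ℝ V := by
  rw [direction_perpBisector, ← finrank_span_singleton (K := ℝ) (vsub_ne_zero.2 h.symm), add_comm]
  exact Submodule.finrank_add_finrank_orthogonal _

theorem center_ne_of_mem_sphere {O p q : P} {r : ℝ} (hp : p ∈ sphere O r) (hq : q ∈ sphere O r)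
    (hqp : q ≠ p) : O ≠ p := by
  rintro rfl
  rw [Metric.mem_sphere, dist_self] at hp
  rw [Metric.mem_sphere, ← hp, dist_eq_zero] at hq
  exact hqp hq

theorem inversion_mem_perpBisector_of_mem_sphere {O p x : P} {r : ℝ} (hp : p ∈ sphere O r)
    (hx : x ∈ sphere O r) (hxp : x ≠ p) :
    inversion p 1 x ∈ perpBisector p (inversion p 1 O) := by
  rw [inversion_mem_perpBisector_inversion_iff one_ne_zero hxp (center_ne_of_mem_sphere hp hx hxp),
    Metric.mem_sphere.1 hx, dist_comm, Metric.mem_sphere.1 hp]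

theorem inversion_mem_sphere_of_mem_perpBisector {O p w : P} (hO : O ≠ p)
    (hw : w ∈ perpBisector p (inversion p 1 O)) :
    inversion p 1 w ∈ sphere O (dist O p) ∧ inversion p 1 w ≠ p := by
  rw [← inversion_inversion p one_ne_zero w] at hw
  exact (preimage_inversion_perpBisector_inversion one_ne_zero hO).subset hw

theorem exists_sphere_inversion_mem (A : AffineSubspace ℝ P) [Nonempty A]
    [A.direction.HasOrthogonalProjection] {p : P} (hpA : p ∉ A) :
    ∃ s : Sphere P, ∀ x ∈ A, inversion p 1 x ∈ s := by
  have hy : reflection A p ≠ p := mt (reflection_eq_self_iff p).1 hpA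
  refine ⟨⟨inversion p 1 (reflection A p), 1 ^ 2 / dist (reflection A p) p⟩, fun x hx => ?_⟩
  have hx' : x ∈ perpBisector p (reflection A p) := by
    rw [mem_perpBisector_iff_dist_eq, dist_reflection_eq_of_mem A hx]
  exact EuclideanGeometry.mem_sphere.2
    ((image_inversion_perpBisector one_ne_zero hy).subset ⟨x, hx', rfl⟩).1

theorem perpBisector_inversion_ne {A : AffineSubspace ℝ P} {O p : P} (hO : O ≠ p) (hpA : p ∈ A) :
    perpBisector p (inversion p 1 O) ≠ A := by
  rintro rfl
  exact hO ((center_eq_inversion one_ne_zero).1 (left_mem_perpBisector.1 hpA))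

variable [FiniteDimensional ℝ V]

theorem eq_or_eq_or_eq_of_mem_sphere_inter (hV : finrank ℝ V = 3) {O : P} {r : ℝ}
    {A A' : AffineSubspace ℝ P} (hA : finrank ℝ A.direction = 2)
    (hA' : finrank ℝ A'.direction = 2) (hne : A ≠ A') :
    ∀ x ∈ sphere O r ∩ A ∩ A', ∀ y ∈ sphere O r ∩ A ∩ A', ∀ z ∈ sphere O r ∩ A ∩ A',
      x = y ∨ x = z ∨ y = z := by
  intro x hx y hy z hz
  by_contra! h
  have hcol : Collinear ℝ {x, y, z} := collinear_of_subset_inter hV hA hA' hne (by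
    rintro w (rfl | rfl | rfl)
    exacts [⟨hx.1.2, hx.2⟩, ⟨hy.1.2, hy.2⟩, ⟨hz.1.2, hz.2⟩])
  have hcos : Cospherical ({x, y, z} : Set P) := ⟨O, r, by
    rintro w (rfl | rfl | rfl)
    exacts [hx.1.1, hy.1.1, hz.1.1]⟩
  exact affineIndependent_iff_not_collinear_set.1 (hcos.affineIndependent_of_ne h.1 h.2.1 h.2.2)
    hcol

theorem finrank_direction_perpBisector_inversion (hV : finrank ℝ V = 3) {O p : P} (hO : O ≠ p) :
    finrank ℝ (perpBisector p (inversion p 1 O)).direction = 2 := by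
  have := finrank_direction_perpBisector (mt (center_eq_inversion one_ne_zero).1 hO)
  omega

theorem inversion_mem_line_of_mem_sphere (hV : finrank ℝ V = 3) {A : AffineSubspace ℝ P}
    (hA : finrank ℝ A.direction = 2) {O p q a b : P} {r : ℝ} (hp : p ∈ sphere O r) (hpA : p ∈ A)
    (hq : q ∈ sphere O r) (hqA : q ∈ A) (hqp : q ≠ p) (ha : a ∈ sphere O r) (haA : a ∈ A)
    (hap : a ≠ p) (hb : b ∈ sphere O r) (hbA : b ∈ A) (hbp : b ≠ p) (hab : a ≠ b) :
    inversion p 1 q ∈ line[ℝ, inversion p 1 a, inversion p 1 b] := by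
  have hO := center_ne_of_mem_sphere hp hq hqp
  have hmem : ∀ x ∈ sphere O r, x ∈ A → x ≠ p →
      inversion p 1 x ∈ (perpBisector p (inversion p 1 O) : Set P) ∩ A := fun x hx hxA hxp =>
    ⟨inversion_mem_perpBisector_of_mem_sphere hp hx hxp,
      mapsTo_inversion_affineSubspace_of_mem hpA hxA⟩
  have hcol : Collinear ℝ {inversion p 1 a, inversion p 1 b, inversion p 1 q} :=
    collinear_of_subset_inter hV (finrank_direction_perpBisector_inversion hV hO) hA
      (perpBisector_inversion_ne hO hpA) (by
        rintro x (rfl | rfl | rfl)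
        exacts [hmem a ha haA hap, hmem b hb hbA hbp, hmem q hq hqA hqp])
  exact hcol.mem_affineSpan_of_mem_of_ne (by simp) (by simp) (by simp)
    ((inversion_injective p one_ne_zero).ne hab)

theorem exists_mem_sphere_dist_inversion_eq (hV : finrank ℝ V = 3) {A : AffineSubspace ℝ P}
    (hA : finrank ℝ A.direction = 2) {O p q : P} {r : ℝ} (hp : p ∈ sphere O r) (hpA : p ∈ A)
    (hq : q ∈ sphere O r) (hqA : q ∈ A) (hqp : q ≠ p) {t : ℝ} (ht : 0 ≤ t) :
    ∃ z ∈ sphere O r, z ∈ A ∧ z ≠ p ∧ dist (inversion p 1 z) (inversion p 1 q) = t := by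
  have hO := center_ne_of_mem_sphere hp hq hqp
  have hqB := inversion_mem_perpBisector_of_mem_sphere hp hq hqp
  have hqA' := mapsTo_inversion_affineSubspace_of_mem (R := 1) hpA hqA
  have hline := AffineSubspace.finrank_direction_inf_eq_one hV
    (finrank_direction_perpBisector_inversion hV hO) hA (perpBisector_inversion_ne hO hpA) hqB hqA'
  obtain ⟨d, hd, hd0⟩ := Submodule.exists_mem_ne_zero_of_ne_bot
    (p := (perpBisector p (inversion p 1 O)).direction ⊓ A.direction) fun h => by
      rw [h, finrank_bot] at hline
      exact zero_ne_one hline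
  set w := (t / ‖d‖) • d +ᵥ inversion p 1 q
  have hwB : w ∈ perpBisector p (inversion p 1 O) :=
    AffineSubspace.vadd_mem_of_mem_direction (Submodule.smul_mem _ _ hd.1) hqB
  have hwA : w ∈ A := AffineSubspace.vadd_mem_of_mem_direction (Submodule.smul_mem _ _ hd.2) hqA'
  obtain ⟨hzS, hzp⟩ := inversion_mem_sphere_of_mem_perpBisector hO hwB
  refine ⟨inversion p 1 w, by rwa [dist_comm, Metric.mem_sphere.1 hp] at hzS,
    mapsTo_inversion_affineSubspace_of_mem hpA hwA, hzp, ?_⟩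
  rw [inversion_inversion p one_ne_zero, dist_vadd_left, norm_smul, Real.norm_eq_abs,
    abs_div, abs_norm, abs_of_nonneg ht, div_mul_cancel₀ _ (norm_ne_zero_iff.2 hd0)]

theorem dist_inversion_mul_dist_inversion_eq (hV : finrank ℝ V = 3)
    {A₁ A₂ A : AffineSubspace ℝ P} (hA₁ : finrank ℝ A₁.direction = 2)
    (hA₂ : finrank ℝ A₂.direction = 2) {O p q a b u v : P} {r : ℝ}
    (hp : p ∈ (sphere O r ∩ A₁) ∩ (sphere O r ∩ A₂)) (hpA : p ∉ A)
    (hq : q ∈ (sphere O r ∩ A₁) ∩ (sphere O r ∩ A₂)) (hqp : q ≠ p)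
    (ha : a ∈ sphere O r ∩ A ∩ A₁) (hb : b ∈ sphere O r ∩ A ∩ A₁) (hab : a ≠ b)
    (hu : u ∈ sphere O r ∩ A ∩ A₂) (hv : v ∈ sphere O r ∩ A ∩ A₂) (huv : u ≠ v) :
    dist (inversion p 1 a) (inversion p 1 q) * dist (inversion p 1 b) (inversion p 1 q) =
      dist (inversion p 1 u) (inversion p 1 q) * dist (inversion p 1 v) (inversion p 1 q) := by
  have : Nonempty A := ⟨⟨a, ha.1.2⟩⟩
  obtain ⟨s, hs⟩ := exists_sphere_inversion_mem A hpA
  have hne : ∀ x ∈ A, x ≠ p := fun x hx h => hpA (h ▸ hx)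
  have hab' := inversion_mem_line_of_mem_sphere hV hA₁ hp.1.1 hp.1.2 hq.1.1 hq.1.2 hqp
    ha.1.1 ha.2 (hne a ha.1.2) hb.1.1 hb.2 (hne b hb.1.2) hab
  have huv' := inversion_mem_line_of_mem_sphere hV hA₂ hp.2.1 hp.2.2 hq.2.1 hq.2.2 hqp
    hu.1.1 hu.2 (hne u hu.1.2) hv.1.1 hv.2 (hne v hv.1.2) huv
  simp only [dist_comm _ (inversion p 1 q)]
  rw [Sphere.mul_dist_eq_abs_power hab' (hs a ha.1.2) (hs b hb.1.2),
    Sphere.mul_dist_eq_abs_power huv' (hs u hu.1.2) (hs v hv.1.2)]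

end Inversion

section Coloring

open EuclideanGeometry Metric

variable {V P : Type*} [NormedAddCommGroup V] [InnerProductSpace ℝ V] [MetricSpace P]
  [NormedAddTorsor V P]

-- The coordinate `L` of the sketch above.
noncomputable def logDistInversion (p q z : P) : ℝ :=
  Real.log (dist (inversion p 1 z) (inversion p 1 q))

open Classical in
noncomputable def twoCirclesColoring (A₁ A₂ : AffineSubspace ℝ P) (p q z : P) : Fin 5 :=
  if z ∈ A₁ ∧ z ∈ A₂ then 2
  else if z ∈ A₁ then firstCircleColor (quarterResidue (logDistInversion p q z))
  else secondCircleColor (quarterResidue (logDistInversion p q z))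

variable {A₁ A₂ : AffineSubspace ℝ P} {p q z : P}

theorem twoCirclesColoring_of_mem_of_mem (h₁ : z ∈ A₁) (h₂ : z ∈ A₂) :
    twoCirclesColoring A₁ A₂ p q z = 2 := by
  simp [twoCirclesColoring, h₁, h₂]

theorem twoCirclesColoring_of_mem_of_notMem (h₁ : z ∈ A₁) (h₂ : z ∉ A₂) :
    twoCirclesColoring A₁ A₂ p q z =
      firstCircleColor (quarterResidue (logDistInversion p q z)) := by
  simp [twoCirclesColoring, h₁, h₂]

theorem twoCirclesColoring_of_notMem (h₁ : z ∉ A₁) :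
    twoCirclesColoring A₁ A₂ p q z =
      secondCircleColor (quarterResidue (logDistInversion p q z)) := by
  simp [twoCirclesColoring, h₁]

theorem twoCirclesColoring_mem_of_mem_left (h₁ : z ∈ A₁) :
    twoCirclesColoring A₁ A₂ p q z ∈ [0, 1, 2] := by
  unfold twoCirclesColoring firstCircleColor
  split_ifs <;> simp_all

theorem twoCirclesColoring_mem_of_mem_right (h₂ : z ∈ A₂) :
    twoCirclesColoring A₁ A₂ p q z ∈ [2, 3, 4] := by
  unfold twoCirclesColoring secondCircleColor
  split_ifs <;> simp_all

variable [FiniteDimensional ℝ V] {O : P} {r : ℝ}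

theorem exists_logDistInversion_eq (hV : finrank ℝ V = 3) {A : AffineSubspace ℝ P}
    (hA : finrank ℝ A.direction = 2) (hp : p ∈ sphere O r) (hpA : p ∈ A)
    (hq : q ∈ sphere O r) (hqA : q ∈ A) (hqp : q ≠ p) (y : ℝ) :
    ∃ z ∈ sphere O r, z ∈ A ∧ z ≠ p ∧ z ≠ q ∧ logDistInversion p q z = y := by
  obtain ⟨z, hz, hzA, hzp, hd⟩ :=
    exists_mem_sphere_dist_inversion_eq hV hA hp hpA hq hqA hqp (Real.exp_pos y).le
  refine ⟨z, hz, hzA, hzp, ?_, by rw [logDistInversion, hd, Real.log_exp]⟩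
  rintro rfl
  rw [dist_self] at hd
  exact (Real.exp_pos y).ne hd

theorem surjOn_twoCirclesColoring (hV : finrank ℝ V = 3) (hA₁ : finrank ℝ A₁.direction = 2)
    (hA₂ : finrank ℝ A₂.direction = 2) (hpq : p ≠ q)
    (hcap : (sphere O r ∩ A₁) ∩ (sphere O r ∩ A₂) = {p, q}) :
    Set.SurjOn (twoCirclesColoring A₁ A₂ p q) ((sphere O r ∩ A₁) ∪ (sphere O r ∩ A₂))
      Set.univ := by
  have hp : p ∈ (sphere O r ∩ A₁) ∩ (sphere O r ∩ A₂) := hcap ▸ Set.mem_insert p {q}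
  have hq : q ∈ (sphere O r ∩ A₁) ∩ (sphere O r ∩ A₂) := hcap ▸ Set.mem_insert_of_mem p rfl
  have hnot : ∀ z ∈ sphere O r, z ≠ p → z ≠ q → z ∈ A₁ → z ∉ A₂ := fun z hz hzp hzq h₁ h₂ => by
    have : z ∈ ({p, q} : Set P) := hcap ▸ ⟨⟨hz, h₁⟩, ⟨hz, h₂⟩⟩
    rcases this with h | h
    exacts [hzp h, hzq h]
  have hone (m : ℤ) : ∃ z ∈ (sphere O r ∩ A₁) ∪ (sphere O r ∩ A₂),
      twoCirclesColoring A₁ A₂ p q z = firstCircleColor (m : ZMod 4) := by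
    obtain ⟨z, hz, hzA, hzp, hzq, hzL⟩ :=
      exists_logDistInversion_eq hV hA₁ hp.1.1 hp.1.2 hq.1.1 hq.1.2 hpq.symm (m / 4)
    refine ⟨z, Or.inl ⟨hz, hzA⟩, ?_⟩
    rw [twoCirclesColoring_of_mem_of_notMem hzA (hnot z hz hzp hzq hzA), hzL,
      quarterResidue_intCast_div_four]
  have htwo (m : ℤ) : ∃ z ∈ (sphere O r ∩ A₁) ∪ (sphere O r ∩ A₂),
      twoCirclesColoring A₁ A₂ p q z = secondCircleColor (m : ZMod 4) := by
    obtain ⟨z, hz, hzA, hzp, hzq, hzL⟩ :=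
      exists_logDistInversion_eq hV hA₂ hp.2.1 hp.2.2 hq.2.1 hq.2.2 hpq.symm (m / 4)
    refine ⟨z, Or.inr ⟨hz, hzA⟩, ?_⟩
    rw [twoCirclesColoring_of_notMem fun h => hnot z hz hzp hzq h hzA, hzL,
      quarterResidue_intCast_div_four]
  rintro c -
  fin_cases c
  · exact hone 0
  · exact hone 2
  · exact ⟨p, Or.inl hp.1, twoCirclesColoring_of_mem_of_mem hp.1.2 hp.2.2⟩
  · exact htwo 1
  · exact htwo 3

theorem not_nodup_twoCirclesColoring (hV : finrank ℝ V = 3)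
    (hA₁ : finrank ℝ A₁.direction = 2) (hA₂ : finrank ℝ A₂.direction = 2)
    {A : AffineSubspace ℝ P} {a b u v : P}
    (hp : p ∈ (sphere O r ∩ A₁) ∩ (sphere O r ∩ A₂)) (hpA : p ∉ A)
    (hq : q ∈ (sphere O r ∩ A₁) ∩ (sphere O r ∩ A₂)) (hqp : q ≠ p)
    (ha : a ∈ sphere O r ∩ A ∩ A₁) (ha₂ : a ∉ A₂) (hb : b ∈ sphere O r ∩ A ∩ A₁) (hb₂ : b ∉ A₂)
    (hab : a ≠ b) (hu : u ∈ sphere O r ∩ A ∩ A₂) (hu₁ : u ∉ A₁) (hv : v ∈ sphere O r ∩ A ∩ A₂)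
    (hv₁ : v ∉ A₁) (huv : u ≠ v) :
    ¬ [twoCirclesColoring A₁ A₂ p q a, twoCirclesColoring A₁ A₂ p q b,
      twoCirclesColoring A₁ A₂ p q u, twoCirclesColoring A₁ A₂ p q v].Nodup := by
  rw [twoCirclesColoring_of_mem_of_notMem ha.2 ha₂, twoCirclesColoring_of_mem_of_notMem hb.2 hb₂,
    twoCirclesColoring_of_notMem hu₁, twoCirclesColoring_of_notMem hv₁]
  refine not_nodup_colors ?_
  have hne {x : P} {B : AffineSubspace ℝ P} (hqB : q ∈ B) (hx : x ∉ B) :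
      dist (inversion p 1 x) (inversion p 1 q) ≠ 0 :=
    dist_ne_zero.2 ((inversion_injective p one_ne_zero).ne fun h => hx (h ▸ hqB))
  simp only [logDistInversion]
  rw [← Real.log_mul (hne hq.2.2 ha₂) (hne hq.2.2 hb₂),
    ← Real.log_mul (hne hq.1.2 hu₁) (hne hq.1.2 hv₁),
    dist_inversion_mul_dist_inversion_eq hV hA₁ hA₂ hp hpA hq hqp ha hb hab hu hv huv]

theorem not_nodup_twoCirclesColoring_of_subset_pair (hV : finrank ℝ V = 3)
    (hA₁ : finrank ℝ A₁.direction = 2) (hA₂ : finrank ℝ A₂.direction = 2) (hpq : p ≠ q)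
    (hcap : (sphere O r ∩ A₁) ∩ (sphere O r ∩ A₂) = {p, q}) {A : AffineSubspace ℝ P}
    {a b u v : P} (hT₁ : sphere O r ∩ A ∩ A₁ ⊆ {a, b})
    (hab : a ≠ b → a ∈ sphere O r ∩ A ∩ A₁ ∧ b ∈ sphere O r ∩ A ∩ A₁)
    (hT₂ : sphere O r ∩ A ∩ A₂ ⊆ {u, v})
    (huv : u ≠ v → u ∈ sphere O r ∩ A ∩ A₂ ∧ v ∈ sphere O r ∩ A ∩ A₂) :
    ¬ [twoCirclesColoring A₁ A₂ p q a, twoCirclesColoring A₁ A₂ p q b,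
      twoCirclesColoring A₁ A₂ p q u, twoCirclesColoring A₁ A₂ p q v].Nodup := by
  intro hnd
  have hΓ := hnd
  simp only [List.nodup_cons, List.mem_cons, List.not_mem_nil, or_false, not_or] at hΓ
  obtain ⟨⟨hΓab, hΓau, hΓav⟩, ⟨hΓbu, hΓbv⟩, hΓuv, -⟩ := hΓ
  have hp : p ∈ (sphere O r ∩ A₁) ∩ (sphere O r ∩ A₂) := hcap ▸ Set.mem_insert p {q}
  have hq : q ∈ (sphere O r ∩ A₁) ∩ (sphere O r ∩ A₂) := hcap ▸ Set.mem_insert_of_mem p rfl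
  have hab' : a ≠ b := fun h => hΓab (h ▸ rfl)
  have huv' : u ≠ v := fun h => hΓuv (h ▸ rfl)
  obtain ⟨ha, hb⟩ := hab hab'
  obtain ⟨hu, hv⟩ := huv huv'
  have hpA : p ∉ A := fun hpA => by
    rcases hT₁ ⟨⟨hp.1.1, hpA⟩, hp.1.2⟩ with rfl | rfl <;>
      rcases hT₂ ⟨⟨hp.1.1, hpA⟩, hp.2.2⟩ with h | h <;> subst h <;> contradiction
  have ha₂ : a ∉ A₂ := fun h => by rcases hT₂ ⟨ha.1, h⟩ with rfl | rfl <;> contradiction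
  have hb₂ : b ∉ A₂ := fun h => by rcases hT₂ ⟨hb.1, h⟩ with rfl | rfl <;> contradiction
  have hu₁ : u ∉ A₁ := fun h => by rcases hT₁ ⟨hu.1, h⟩ with rfl | rfl <;> contradiction
  have hv₁ : v ∉ A₁ := fun h => by rcases hT₁ ⟨hv.1, h⟩ with rfl | rfl <;> contradiction
  exact not_nodup_twoCirclesColoring hV hA₁ hA₂ hp hpA hq hpq.symm ha ha₂ hb hb₂ hab' hu hu₁ hv
    hv₁ huv' hnd

theorem ncard_image_twoCirclesColoring_le (hV : finrank ℝ V = 3)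
    (hA₁ : finrank ℝ A₁.direction = 2) (hA₂ : finrank ℝ A₂.direction = 2) (hpq : p ≠ q)
    (hcap : (sphere O r ∩ A₁) ∩ (sphere O r ∩ A₂) = {p, q}) {A : AffineSubspace ℝ P}
    (hA : finrank ℝ A.direction = 2) :
    (twoCirclesColoring A₁ A₂ p q '' (sphere O r ∩ A ∩ (A₁ ∪ A₂ : Set P))).ncard ≤ 3 := by
  by_cases h₁ : A = A₁
  · subst h₁
    refine Set.ncard_le_length (l := [0, 1, 2]) ?_
    rintro _ ⟨z, ⟨⟨-, hzA⟩, -⟩, rfl⟩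
    exact twoCirclesColoring_mem_of_mem_left hzA
  by_cases h₂ : A = A₂
  · subst h₂
    refine Set.ncard_le_length (l := [2, 3, 4]) ?_
    rintro _ ⟨z, ⟨⟨-, hzA⟩, -⟩, rfl⟩
    exact twoCirclesColoring_mem_of_mem_right hzA
  have : Nonempty P := ⟨p⟩
  obtain ⟨a, b, hT₁, hab⟩ :=
    Set.exists_subset_pair (eq_or_eq_or_eq_of_mem_sphere_inter hV hA hA₁ h₁)
  obtain ⟨u, v, hT₂, huv⟩ :=
    Set.exists_subset_pair (eq_or_eq_or_eq_of_mem_sphere_inter hV hA hA₂ h₂)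
  refine Nat.le_of_lt_succ (Set.ncard_lt_length ?_
    (not_nodup_twoCirclesColoring_of_subset_pair hV hA₁ hA₂ hpq hcap hT₁ hab hT₂ huv))
  rintro _ ⟨z, ⟨hz, hz₁ | hz₂⟩, rfl⟩
  · rcases hT₁ ⟨hz, hz₁⟩ with rfl | rfl <;> simp
  · rcases hT₂ ⟨hz, hz₂⟩ with rfl | rfl <;> simp

end Coloring

theorem two_circles_coloring_general
    (A₁ A₂ : AffineSubspace ℝ (EuclideanSpace ℝ (Fin 3)))
    (hA₁ : Module.finrank ℝ A₁.direction = 2)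
    (hA₂ : Module.finrank ℝ A₂.direction = 2)
    (htrans : ∃ p q : EuclideanSpace ℝ (Fin 3), p ≠ q ∧
      (Metric.sphere (0 : EuclideanSpace ℝ (Fin 3)) 1 ∩ (A₁ : Set (EuclideanSpace ℝ (Fin 3)))) ∩
        (Metric.sphere (0 : EuclideanSpace ℝ (Fin 3)) 1 ∩ (A₂ : Set (EuclideanSpace ℝ (Fin 3)))) =
        {p, q}) :
    ∃ Γ : ((Metric.sphere (0 : EuclideanSpace ℝ (Fin 3)) 1 ∩ (A₁ : Set (EuclideanSpace ℝ (Fin 3)))) ∪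
            (Metric.sphere (0 : EuclideanSpace ℝ (Fin 3)) 1 ∩ (A₂ : Set (EuclideanSpace ℝ (Fin 3)))) :
            Set (EuclideanSpace ℝ (Fin 3))) → Fin 5,
      Function.Surjective Γ ∧
      ∀ A : AffineSubspace ℝ (EuclideanSpace ℝ (Fin 3)),
        Module.finrank ℝ A.direction = 2 → (∃ x ∈ A, ‖x‖ < 1) →
        (Γ '' {p | (p : EuclideanSpace ℝ (Fin 3)) ∈
            Metric.sphere (0 : EuclideanSpace ℝ (Fin 3)) 1 ∩ (A : Set (EuclideanSpace ℝ (Fin 3)))}).ncard ≤ 3 := by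
  obtain ⟨p, q, hpq, hcap⟩ := htrans
  have hV : finrank ℝ (EuclideanSpace ℝ (Fin 3)) = 3 := finrank_euclideanSpace_fin
  refine ⟨fun z => twoCirclesColoring A₁ A₂ p q z, fun c => ?_, fun A hA _ => ?_⟩
  · obtain ⟨z, hz, hzc⟩ := surjOn_twoCirclesColoring hV hA₁ hA₂ hpq hcap (Set.mem_univ c)
    exact ⟨⟨z, hz⟩, hzc⟩
  · refine (Set.ncard_le_ncard ?_ (Set.toFinite _)).trans
      (ncard_image_twoCirclesColoring_le hV hA₁ hA₂ hpq hcap hA)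
    rintro _ ⟨z, hz, rfl⟩
    exact ⟨z, ⟨hz, z.2.imp And.right And.right⟩, rfl⟩

/-- Given two transversally intersecting circles `C₁, C₂` on the standard `2`-sphere, there is
a surjective `5`-coloring of `C₁ ∪ C₂` such that every circle of `S²` meets `C₁ ∪ C₂` in at
most `3` colors. -/
theorem two_circles_coloring
    (A₁ A₂ : AffineSubspace ℝ (EuclideanSpace ℝ (Fin 3)))
    (hA₁ : Module.finrank ℝ A₁.direction = 2) (hb₁ : ∃ x ∈ A₁, ‖x‖ < 1)
    (hA₂ : Module.finrank ℝ A₂.direction = 2) (hb₂ : ∃ x ∈ A₂, ‖x‖ < 1)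
    (htrans : ∃ p q : EuclideanSpace ℝ (Fin 3), p ≠ q ∧
      (Metric.sphere (0 : EuclideanSpace ℝ (Fin 3)) 1 ∩ (A₁ : Set (EuclideanSpace ℝ (Fin 3)))) ∩
        (Metric.sphere (0 : EuclideanSpace ℝ (Fin 3)) 1 ∩ (A₂ : Set (EuclideanSpace ℝ (Fin 3)))) =
        {p, q}) :
    ∃ Γ : ((Metric.sphere (0 : EuclideanSpace ℝ (Fin 3)) 1 ∩ (A₁ : Set (EuclideanSpace ℝ (Fin 3)))) ∪
            (Metric.sphere (0 : EuclideanSpace ℝ (Fin 3)) 1 ∩ (A₂ : Set (EuclideanSpace ℝ (Fin 3)))) :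
            Set (EuclideanSpace ℝ (Fin 3))) → Fin 5,
      Function.Surjective Γ ∧
      ∀ A : AffineSubspace ℝ (EuclideanSpace ℝ (Fin 3)),
        Module.finrank ℝ A.direction = 2 → (∃ x ∈ A, ‖x‖ < 1) →
        (Γ '' {p | (p : EuclideanSpace ℝ (Fin 3)) ∈
            Metric.sphere (0 : EuclideanSpace ℝ (Fin 3)) 1 ∩ (A : Set (EuclideanSpace ℝ (Fin 3)))}).ncard ≤ 3 :=
  two_circles_coloring_general A₁ A₂ hA₁ hA₂ htrans
end

section
/- Let n ≥ 2. There exists a full (n+1)-coloring Γ of the standard n-sphere S^n such that every great (n−1)-sphere of S^n contains at most n colors; that is, for every n-dimensional linear subspace P of ℝ^{n+1}, the image Γ(S^n ∩ P) has at most n elements. -/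
/-!
Colour a unit vector by the index of its first nonzero coordinate; the basis vectors show that
all `n + 1` colours occur. Vectors with pairwise distinct leading indices form a triangular, hence
linearly independent, family, so the colours met by a linear subspace `P` number at most
`finrank P`, which is `n` for a hyperplane.
-/

open Finset Module

section LeadingIndex

open Classical

variable {ι M : Type*} [Fintype ι] [LinearOrder ι] [Zero M]

noncomputable def leadingIndex (x : ι → M) (hx : x ≠ 0) : ι :=
  (univ.filter fun i => x i ≠ 0).min' <| by
    obtain ⟨i, hi⟩ := Function.ne_iff.1 hx
    exact ⟨i, by simpa using hi⟩

theorem apply_leadingIndex_ne_zero (x : ι → M) (hx : x ≠ 0) : x (leadingIndex x hx) ≠ 0 :=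
  (mem_filter.1 (min'_mem (univ.filter fun i => x i ≠ 0) _)).2

theorem apply_eq_zero_of_lt_leadingIndex {x : ι → M} (hx : x ≠ 0) {j : ι}
    (hj : j < leadingIndex x hx) : x j = 0 := by
  by_contra hxj
  exact (min'_le (univ.filter fun i => x i ≠ 0) j (by simpa using hxj)).not_gt hj

theorem leadingIndex_eq_iff {x : ι → M} (hx : x ≠ 0) {i : ι} :
    leadingIndex x hx = i ↔ x i ≠ 0 ∧ ∀ j < i, x j = 0 := by
  refine ⟨?_, fun ⟨hxi, hlt⟩ => le_antisymm ?_ ?_⟩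
  · rintro rfl
    exact ⟨apply_leadingIndex_ne_zero x hx, fun j => apply_eq_zero_of_lt_leadingIndex hx⟩
  · exact min'_le _ i (by simpa using hxi)
  · by_contra! hlt'
    exact apply_leadingIndex_ne_zero x hx (hlt _ hlt')

end LeadingIndex

section Triangular

variable {K ι : Type*} [Field K] [Fintype ι] [LinearOrder ι]

theorem linearIndependent_of_triangular {s : Set ι} (v : s → ι → K)
    (hdiag : ∀ i, v i i ≠ 0) (htri : ∀ i j : s, j < i → v i j = 0) : LinearIndependent K v := by
  classical
  have hrestrict : LinearIndependent K fun i j : s => v i j := by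
    refine Matrix.linearIndependent_rows_of_det_ne_zero (A := Matrix.of fun i j : s => v i j) ?_
    rw [Matrix.det_of_isUpperTriangular (M := Matrix.of fun i j : s => v i j)
      fun i j hji => htri i j hji]
    exact prod_ne_zero_iff.2 fun i _ => hdiag i
  exact LinearIndependent.of_comp (LinearMap.funLeft K K Subtype.val) hrestrict

theorem ncard_setOf_leadingIndex_le_finrank (P : Submodule K (ι → K)) :
    {i | ∃ x ∈ P, ∃ hx : x ≠ 0, leadingIndex x hx = i}.ncard ≤ finrank K P := by
  classical
  set s := {i | ∃ x ∈ P, ∃ hx : x ≠ 0, leadingIndex x hx = i}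
  choose x hxP hx0 hlead using fun i : s => i.2
  have hli : LinearIndependent K x := by
    refine linearIndependent_of_triangular x (fun i => ?_) (fun i j hji => ?_)
    · simpa [hlead i] using apply_leadingIndex_ne_zero (x i) (hx0 i)
    · exact apply_eq_zero_of_lt_leadingIndex (hx0 i) (by simpa [hlead i] using hji)
  have hliP : LinearIndependent K fun i => (⟨x i, hxP i⟩ : P) :=
    LinearIndependent.of_comp P.subtype hli
  rw [← Nat.card_coe_set_eq, Nat.card_eq_fintype_card]
  exact hliP.fintype_card_le_finrank

end Triangular

theorem sharp_great_sphere_n_plus_one_general (n : ℕ) :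
    ∃ Γ : (Metric.sphere (0 : EuclideanSpace ℝ (Fin (n + 1))) 1) → Fin (n + 1),
      Function.Surjective Γ ∧
      ∀ P : Submodule ℝ (EuclideanSpace ℝ (Fin (n + 1))),
        Module.finrank ℝ P = n →
        (Γ '' {p | (p : EuclideanSpace ℝ (Fin (n + 1))) ∈ P}).ncard ≤ n := by
  have hne : ∀ p : Metric.sphere (0 : EuclideanSpace ℝ (Fin (n + 1))) 1,
      WithLp.ofLp (p : EuclideanSpace ℝ (Fin (n + 1))) ≠ 0 :=
    fun p => (WithLp.ofLp_eq_zero 2).not.2 (ne_zero_of_mem_unit_sphere p)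
  refine ⟨fun p => leadingIndex _ (hne p), fun i => ?_, fun P hP => ?_⟩
  · have hsingle : EuclideanSpace.single i (1 : ℝ) ∈ Metric.sphere 0 1 := by simp
    refine ⟨⟨_, hsingle⟩, (leadingIndex_eq_iff _).2 ⟨by simp, fun j hji => ?_⟩⟩
    simp [hji.ne]
  · let e : EuclideanSpace ℝ (Fin (n + 1)) ≃ₗ[ℝ] (Fin (n + 1) → ℝ) := WithLp.linearEquiv 2 ℝ _
    refine (Set.ncard_le_ncard ?_).trans <|
      (ncard_setOf_leadingIndex_le_finrank (P.map e.toLinearMap)).trans_eq <| by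
        rw [e.finrank_map_eq, hP]
    rintro _ ⟨p, hpP, rfl⟩
    exact ⟨_, Submodule.mem_map_of_mem hpP, hne p, rfl⟩

/-- Sharpness (Euclidean analogue): for `n ≥ 2` there is a full `(n+1)`-coloring of the
standard `n`-sphere in which every great `(n-1)`-sphere contains at most `n` colors. -/
theorem sharp_great_sphere_n_plus_one (n : ℕ) (hn : 2 ≤ n) :
    ∃ Γ : (Metric.sphere (0 : EuclideanSpace ℝ (Fin (n + 1))) 1) → Fin (n + 1),
      Function.Surjective Γ ∧
      ∀ P : Submodule ℝ (EuclideanSpace ℝ (Fin (n + 1))),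
        Module.finrank ℝ P = n →
        (Γ '' {p | (p : EuclideanSpace ℝ (Fin (n + 1))) ∈ P}).ncard ≤ n :=
  sharp_great_sphere_n_plus_one_general n
end

section
/- Let n ≥ 2 and k ≥ n + 2. There exists a full k-coloring Γ of the standard n-sphere S^n such that every great (n−1)-sphere of S^n contains at most n + 1 colors; that is, for every n-dimensional linear subspace P of ℝ^{n+1}, the image Γ(S^n ∩ P) has at most n + 1 elements. -/
/-!
The moment curve `t ↦ (1, t, …, t ^ n)` is in general position: any `n + 1` of its points with
distinct parameters are linearly independent (their Vandermonde determinant is nonzero), so a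
hyperplane through the origin contains at most `n` of them. Give the normalised moment point at
`t = j` the colour `j` for `j < k`, and every other point of the sphere the colour `0`; a great
sphere then meets at most `n` colours besides `0`.
-/

open Function Module Set

section MomentCurve

variable (𝕜 : Type*) [RCLike 𝕜] (n : ℕ)

def momentCurve (t : 𝕜) : EuclideanSpace 𝕜 (Fin (n + 1)) :=
  WithLp.toLp 2 fun i => t ^ (i : ℕ)

variable {𝕜 n}

@[simp]
theorem momentCurve_apply (t : 𝕜) (i : Fin (n + 1)) : momentCurve 𝕜 n t i = t ^ (i : ℕ) :=
  rfl

theorem momentCurve_ne_zero (t : 𝕜) : momentCurve 𝕜 n t ≠ 0 := fun h => by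
  simpa using congrArg (· 0) h

theorem linearIndependent_momentCurve {t : Fin (n + 1) → 𝕜} (ht : Injective t) :
    LinearIndependent 𝕜 (momentCurve 𝕜 n ∘ t) := by
  have hdet : IsUnit (Matrix.vandermonde t) := by
    rw [Matrix.isUnit_iff_isUnit_det, isUnit_iff_ne_zero]
    exact Matrix.det_vandermonde_ne_zero_iff.mpr ht
  exact (Matrix.linearIndependent_rows_iff_isUnit.mpr hdet).map'
    (WithLp.linearEquiv 2 𝕜 _).symm.toLinearMap (LinearEquiv.ker _)

theorem encard_setOf_momentCurve_mem_le {ι : Type*} {t : ι → 𝕜} (ht : Injective t)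
    {P : Submodule 𝕜 (EuclideanSpace 𝕜 (Fin (n + 1)))} (hP : finrank 𝕜 P ≤ n) :
    {i | momentCurve 𝕜 n (t i) ∈ P}.encard ≤ n := by
  by_contra! hlt
  obtain ⟨i₀, -⟩ := nonempty_of_encard_ne_zero (ne_bot_of_gt hlt)
  have : Nonempty ι := ⟨i₀⟩
  obtain ⟨f, hfP, hf⟩ := (finite_univ (α := Fin (n + 1))).exists_injOn_of_encard_le
    (t := {i | momentCurve 𝕜 n (t i) ∈ P}) (by simpa using Order.add_one_le_of_lt hlt)
  have hli : LinearIndependent 𝕜 fun a => (⟨_, hfP (mem_univ a)⟩ : P) :=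
    .of_comp P.subtype (linearIndependent_momentCurve (ht.comp (injOn_univ.mp hf)))
  simpa using hli.fintype_card_le_finrank.trans hP

end MomentCurve

noncomputable def sphereMomentCurve (n : ℕ) (t : ℝ) :
    Metric.sphere (0 : EuclideanSpace ℝ (Fin (n + 1))) 1 :=
  ⟨NormedSpace.normalize (momentCurve ℝ n t), by simpa using momentCurve_ne_zero t⟩

theorem sphereMomentCurve_injective {n : ℕ} (hn : n ≠ 0) : Injective (sphereMomentCurve n) := by
  intro s t h
  have hcoord (i) :=
    congrArg (fun x : Metric.sphere _ 1 => (x : EuclideanSpace ℝ (Fin (n + 1))) i) h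
  have h₀ := hcoord 0
  have h₁ := hcoord ⟨1, by omega⟩
  simp only [sphereMomentCurve, NormedSpace.normalize, PiLp.smul_apply, momentCurve_apply,
    smul_eq_mul, Fin.val_zero, pow_zero, mul_one, pow_one] at h₀ h₁
  rw [h₀] at h₁
  exact mul_left_cancel₀ (inv_ne_zero (norm_ne_zero_iff.mpr (momentCurve_ne_zero t))) h₁

theorem coe_sphereMomentCurve_mem_iff {n : ℕ} (t : ℝ)
    {P : Submodule ℝ (EuclideanSpace ℝ (Fin (n + 1)))} :
    (sphereMomentCurve n t : EuclideanSpace ℝ (Fin (n + 1))) ∈ P ↔ momentCurve ℝ n t ∈ P :=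
  P.smul_mem_iff (inv_ne_zero (norm_ne_zero_iff.mpr (momentCurve_ne_zero t)))

theorem Function.image_extend_const_subset {α β γ : Type*} (f : α → β) (g : α → γ) (c : γ)
    (s : Set β) : extend f g (fun _ => c) '' s ⊆ insert c (g '' (f ⁻¹' s)) := by
  rintro _ ⟨b, hb, rfl⟩
  by_cases h : ∃ a, f a = b
  · classical
    rw [extend_def, dif_pos h]
    exact .inr ⟨_, by rwa [mem_preimage, h.choose_spec], rfl⟩
  · exact .inl (extend_apply' _ _ _ h)

/-- Sharpness (Euclidean analogue): for `n ≥ 2` and `k ≥ n + 2` there is a full `k`-coloring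
of the standard `n`-sphere in which every great `(n-1)`-sphere contains at most `n + 1`
colors. -/
theorem sharp_great_sphere_k (n k : ℕ) (hn : 2 ≤ n) (hk : n + 2 ≤ k) :
    ∃ Γ : (Metric.sphere (0 : EuclideanSpace ℝ (Fin (n + 1))) 1) → Fin k,
      Function.Surjective Γ ∧
      ∀ P : Submodule ℝ (EuclideanSpace ℝ (Fin (n + 1))),
        Module.finrank ℝ P = n →
        (Γ '' {p | (p : EuclideanSpace ℝ (Fin (n + 1))) ∈ P}).ncard ≤ n + 1 := by
  let t : Fin k → ℝ := fun j => (j : ℕ)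
  have ht : Injective t := Nat.cast_injective.comp Fin.val_injective
  let q := sphereMomentCurve n ∘ t
  have hq : Injective q := (sphereMomentCurve_injective (by omega)).comp ht
  refine ⟨extend q id fun _ => ⟨0, by omega⟩, fun j => ⟨q j, hq.extend_apply _ _ j⟩,
    fun P hP => ?_⟩
  have hpre : q ⁻¹' {p | ↑p ∈ P} = {j | momentCurve ℝ n (t j) ∈ P} :=
    ext fun j => coe_sphereMomentCurve_mem_iff (t j)
  have hcolors := encard_setOf_momentCurve_mem_le ht hP.le
  rw [← hpre, ← (toFinite _).cast_ncard_eq] at hcolors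
  calc _ ≤ (insert ⟨0, by omega⟩ (q ⁻¹' {p | ↑p ∈ P})).ncard := by
        simpa only [image_id] using ncard_le_ncard (image_extend_const_subset q id _ _)
    _ ≤ n + 1 := (ncard_insert_le _ _).trans (Nat.add_le_add_right (by exact_mod_cast hcolors) 1)
end

section
/- Let n ≥ 2. There exists a weakly circle-preserving map T : S² → S^n whose image T(S²) consists of exactly 4 points that do not all lie on a single circle of S^n. -/
/-!
Collapse `S²` onto four values: the north pole `N` goes to `e₀`, the south pole to `-e₀`, the rest
of the great circle `x₁ = 0` to `e₁` and everything else to `e₂`, for orthonormal `e₀, e₁, e₂`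
in `ℝⁿ⁺¹`. A plane through `±N` passes through the origin, so if it meets the great circle in a
third point it is the plane `x₁ = 0`. Hence every circle of `S²` misses one of the four classes,
and its image consists of three distinct points of `Sⁿ`, which always lie on a circle. The four
image points do not: a plane through `±e₀` passes through the origin, so it would contain the
three independent vectors `e₀, e₁, e₂`.
-/

open Module Set

section

variable {V : Type*} [AddCommGroup V] [Module ℝ V]

theorem AffineSubspace.mem_direction_of_mem_of_neg_mem {A : AffineSubspace ℝ V} {x p : V}
    (hx : x ∈ A) (hx' : -x ∈ A) (hp : p ∈ A) : p ∈ A.direction := by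
  have h0 : (0 : V) ∈ A := midpoint_self_neg ℝ x ▸ AffineMap.lineMap_mem _ hx hx'
  simpa using AffineSubspace.vsub_mem_direction hp h0

theorem AffineSubspace.mem_span_pair_of_finrank_direction_eq_two {A : AffineSubspace ℝ V}
    (hA : finrank ℝ A.direction = 2) {x y : V} (hxy : LinearIndependent ℝ ![x, y])
    (hx : x ∈ A) (hx' : -x ∈ A) (hy : y ∈ A) {p : V} (hp : p ∈ A) :
    p ∈ Submodule.span ℝ {x, y} := by
  have : FiniteDimensional ℝ A.direction := Module.finite_of_finrank_eq_succ hA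
  have hle : Submodule.span ℝ {x, y} ≤ A.direction := by
    rw [Submodule.span_le, insert_subset_iff, singleton_subset_iff]
    exact ⟨mem_direction_of_mem_of_neg_mem hx hx' hx, mem_direction_of_mem_of_neg_mem hx hx' hy⟩
  have hspan : finrank ℝ (Submodule.span ℝ {x, y}) = 2 := by
    rw [← Matrix.range_cons_cons_empty, finrank_span_eq_card hxy, Fintype.card_fin]
  rw [Submodule.eq_of_le_of_finrank_eq hle (hspan.trans hA.symm)]
  exact mem_direction_of_mem_of_neg_mem hx hx' hp

end

section

variable {E : Type*} [NormedAddCommGroup E] [NormedSpace ℝ E]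

theorem linearIndependent_pair_of_norm_eq_one {x y : E} (hx : ‖x‖ = 1) (hy : ‖y‖ = 1)
    (hyx : y ≠ x) (hyx' : y ≠ -x) : LinearIndependent ℝ ![x, y] := by
  rw [LinearIndependent.pair_iff' (norm_ne_zero_iff.1 (by rw [hx]; exact one_ne_zero))]
  rintro r rfl
  rw [norm_smul, hx, mul_one, Real.norm_eq_abs] at hy
  rcases (abs_eq zero_le_one).1 hy with rfl | rfl
  · exact hyx (one_smul ℝ x)
  · exact hyx' (neg_one_smul ℝ x)

theorem norm_midpoint_lt_one [StrictConvexSpace ℝ E] {x y : E} (hx : ‖x‖ = 1) (hy : ‖y‖ = 1)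
    (hxy : x ≠ y) : ‖midpoint ℝ x y‖ < 1 := by
  rw [midpoint_eq_smul_add, invOf_eq_inv, inv_eq_one_div]
  exact hx ▸ (norm_midpoint_lt_iff (hx.trans hy.symm)).2 hxy

def IsCirclePlane (A : AffineSubspace ℝ E) : Prop :=
  finrank ℝ A.direction = 2 ∧ ∃ x ∈ A, ‖x‖ < 1

end

section

variable {E : Type*} [NormedAddCommGroup E] [InnerProductSpace ℝ E]

theorem exists_isCirclePlane_of_ne {a b c : Metric.sphere (0 : E) 1} (hab : a ≠ b)
    (hac : a ≠ c) (hbc : b ≠ c) :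
    ∃ A : AffineSubspace ℝ E, IsCirclePlane A ∧ ∀ z ∈ ({a, b, c} : Set _), (z : E) ∈ A := by
  have hab' : (a : E) ≠ b := Subtype.coe_ne_coe.2 hab
  have hind : AffineIndependent ℝ ![(a : E), b, c] :=
    EuclideanGeometry.Cospherical.affineIndependent_of_ne ⟨0, 1, by simp⟩ hab'
      (Subtype.coe_ne_coe.2 hac) (Subtype.coe_ne_coe.2 hbc)
  refine ⟨affineSpan ℝ (range ![(a : E), b, c]), ⟨?_, midpoint ℝ (a : E) b, ?_, ?_⟩, ?_⟩
  · rw [direction_affineSpan, hind.finrank_vectorSpan (n := 2) rfl]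
  · exact AffineMap.lineMap_mem _ (mem_affineSpan ℝ ⟨0, rfl⟩) (mem_affineSpan ℝ ⟨1, rfl⟩)
  · exact norm_midpoint_lt_one (by simp) (by simp) hab'
  · rintro z (rfl | rfl | rfl)
    exacts [mem_affineSpan ℝ ⟨0, rfl⟩, mem_affineSpan ℝ ⟨1, rfl⟩, mem_affineSpan ℝ ⟨2, rfl⟩]

theorem exists_isCirclePlane_of_mem_triples {a b c d : Metric.sphere (0 : E) 1} (hab : a ≠ b)
    (hac : a ≠ c) (had : a ≠ d) (hbc : b ≠ c) (hbd : b ≠ d) (hcd : c ≠ d)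
    {s : Set (Metric.sphere (0 : E) 1)}
    (hs : s ∈ ({{b, c, d}, {a, c, d}, {a, b, d}, {a, b, c}} : Set (Set _))) :
    ∃ A : AffineSubspace ℝ E, IsCirclePlane A ∧ ∀ z ∈ s, (z : E) ∈ A := by
  simp only [mem_insert_iff, mem_singleton_iff] at hs
  rcases hs with rfl | rfl | rfl | rfl
  exacts [exists_isCirclePlane_of_ne hbc hbd hcd, exists_isCirclePlane_of_ne hac had hcd,
    exists_isCirclePlane_of_ne hab had hbd, exists_isCirclePlane_of_ne hab hac hbc]

theorem Orthonormal.ne_neg {ι : Type*} {v : ι → E} (hv : Orthonormal ℝ v) (i j : ι) :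
    v i ≠ -v j := by
  intro h
  by_cases hij : i = j
  · subst hij
    have := hv.1 i
    rw [eq_neg_iff_add_eq_zero, ← two_smul ℝ, smul_eq_zero] at h
    simp_all
  · have := hv.inner_eq_zero hij
    rw [h, inner_neg_left, real_inner_self_eq_norm_sq, hv.1 j] at this
    norm_num at this

theorem Orthonormal.three_le_finrank_direction [FiniteDimensional ℝ E] {v : Fin 3 → E}
    (hv : Orthonormal ℝ v) {A : AffineSubspace ℝ E} (h0 : v 0 ∈ A) (h0' : -v 0 ∈ A)
    (h1 : v 1 ∈ A) (h2 : v 2 ∈ A) : 3 ≤ finrank ℝ A.direction := by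
  have hle : Submodule.span ℝ (range v) ≤ A.direction := by
    rw [Submodule.span_le]
    rintro _ ⟨i, rfl⟩
    fin_cases i <;> exact A.mem_direction_of_mem_of_neg_mem h0 h0' ‹_›
  calc 3 = finrank ℝ (Submodule.span ℝ (range v)) := by
        rw [finrank_span_eq_card hv.linearIndependent, Fintype.card_fin]
    _ ≤ _ := Submodule.finrank_mono hle

end

noncomputable def northPole : EuclideanSpace ℝ (Fin 3) := EuclideanSpace.single 2 1

noncomputable def poleMeridianMap {α : Type*} (a b c d : α) (x : EuclideanSpace ℝ (Fin 3)) :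
    α :=
  if x = northPole then a else if x = -northPole then b else if x 1 = 0 then c else d

theorem apply_one_eq_zero_of_mem_of_poles_mem {A : AffineSubspace ℝ (EuclideanSpace ℝ (Fin 3))}
    (hA : finrank ℝ A.direction = 2) (hN : northPole ∈ A) (hS : -northPole ∈ A)
    {w : EuclideanSpace ℝ (Fin 3)} (hwA : w ∈ A) (hw : ‖w‖ = 1) (hw1 : w 1 = 0)
    (hwN : w ≠ northPole) (hwS : w ≠ -northPole) {p : EuclideanSpace ℝ (Fin 3)} (hp : p ∈ A) :
    p 1 = 0 := by
  have hspan := A.mem_span_pair_of_finrank_direction_eq_two hA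
    (linearIndependent_pair_of_norm_eq_one (by simp [northPole]) hw hwN hwS) hN hS hwA hp
  have hker : Submodule.span ℝ {northPole, w} ≤
      LinearMap.ker (EuclideanSpace.proj (1 : Fin 3) :
        EuclideanSpace ℝ (Fin 3) →L[ℝ] ℝ).toLinearMap := by
    rw [Submodule.span_le, insert_subset_iff, singleton_subset_iff]
    simp [northPole, hw1]
  simpa using hker hspan

theorem poleMeridianMap_image_subset_triple {α : Type*} (a b c d : α)
    {A : AffineSubspace ℝ (EuclideanSpace ℝ (Fin 3))} (hA : finrank ℝ A.direction = 2) :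
    ∃ s ∈ ({{b, c, d}, {a, c, d}, {a, b, d}, {a, b, c}} : Set (Set α)),
      ∀ p ∈ A, ‖p‖ = 1 → poleMeridianMap a b c d p ∈ s := by
  by_cases hN : northPole ∈ A
  swap
  · refine ⟨{b, c, d}, by simp, fun p hp _ => ?_⟩
    have : p ≠ northPole := fun h => hN (h ▸ hp)
    unfold poleMeridianMap
    split_ifs <;> simp_all
  by_cases hS : -northPole ∈ A
  swap
  · refine ⟨{a, c, d}, by simp, fun p hp _ => ?_⟩
    have : p ≠ -northPole := fun h => hS (h ▸ hp)
    unfold poleMeridianMap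
    split_ifs <;> simp_all
  by_cases hw : ∃ w ∈ A, ‖w‖ = 1 ∧ w 1 = 0 ∧ w ≠ northPole ∧ w ≠ -northPole
  · obtain ⟨w, hwA, hw, hw1, hwN, hwS⟩ := hw
    refine ⟨{a, b, c}, by simp, fun p hp _ => ?_⟩
    have := apply_one_eq_zero_of_mem_of_poles_mem hA hN hS hwA hw hw1 hwN hwS hp
    unfold poleMeridianMap
    split_ifs <;> simp_all
  · push Not at hw
    refine ⟨{a, b, d}, by simp, fun p hp hp1 => ?_⟩
    unfold poleMeridianMap
    split_ifs with hpN hpS hp0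
    · simp
    · simp
    · exact absurd (hw p hp hp1 hp0 hpN) hpS
    · simp

theorem range_poleMeridianMap {α : Type*} (a b c d : α) :
    range (fun p : Metric.sphere (0 : EuclideanSpace ℝ (Fin 3)) 1 => poleMeridianMap a b c d p) =
      {a, b, c, d} := by
  refine subset_antisymm ?_ ?_
  · rintro _ ⟨p, rfl⟩
    dsimp only [poleMeridianMap]
    split_ifs <;> simp
  · have hSN : -northPole ≠ northPole := fun h => by
      have := congrArg (· 2) h
      norm_num [northPole] at this
    have hoff : ∀ x : EuclideanSpace ℝ (Fin 3), x 2 = 0 → x ≠ northPole ∧ x ≠ -northPole := by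
      rintro x hx
      constructor <;> rintro rfl <;> simp [northPole] at hx
    have h0 := hoff (EuclideanSpace.single 0 1) (by simp)
    have h1 := hoff (EuclideanSpace.single 1 1) (by simp)
    simp only [insert_subset_iff, singleton_subset_iff]
    refine ⟨⟨⟨northPole, by simp [northPole]⟩, by simp [poleMeridianMap]⟩,
      ⟨⟨-northPole, by simp [northPole]⟩, by simp [poleMeridianMap, hSN]⟩,
      ⟨⟨EuclideanSpace.single 0 1, by simp⟩, by simp [poleMeridianMap, h0]⟩,
      ⟨⟨EuclideanSpace.single 1 1, by simp⟩, by simp [poleMeridianMap, h1]⟩⟩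

/-- Sharpness of the five-point theorem: for `n ≥ 2` there exists a weakly circle-preserving
map `T : S² → S^n` whose image consists of exactly `4` points not all lying on one circle. -/
theorem exists_weakly_circle_preserving_four_points (n : ℕ) (hn : 2 ≤ n) :
    ∃ T : (Metric.sphere (0 : EuclideanSpace ℝ (Fin 3)) 1) →
          (Metric.sphere (0 : EuclideanSpace ℝ (Fin (n + 1))) 1),
      (∀ A : AffineSubspace ℝ (EuclideanSpace ℝ (Fin 3)),
        Module.finrank ℝ A.direction = 2 → (∃ x ∈ A, ‖x‖ < 1) →
        ∃ A' : AffineSubspace ℝ (EuclideanSpace ℝ (Fin (n + 1))),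
          Module.finrank ℝ A'.direction = 2 ∧ (∃ x ∈ A', ‖x‖ < 1) ∧
          ∀ p : (Metric.sphere (0 : EuclideanSpace ℝ (Fin 3)) 1),
            (p : EuclideanSpace ℝ (Fin 3)) ∈ A → (T p : EuclideanSpace ℝ (Fin (n + 1))) ∈ A') ∧
      (Set.range T).encard = 4 ∧
      ¬ ∃ A' : AffineSubspace ℝ (EuclideanSpace ℝ (Fin (n + 1))),
          Module.finrank ℝ A'.direction = 2 ∧ (∃ x ∈ A', ‖x‖ < 1) ∧
          ∀ p : (Metric.sphere (0 : EuclideanSpace ℝ (Fin 3)) 1),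
            (T p : EuclideanSpace ℝ (Fin (n + 1))) ∈ A' := by
  let v (i : Fin 3) := EuclideanSpace.single (Fin.castLE (show 3 ≤ n + 1 by omega) i) (1 : ℝ)
  have hv : Orthonormal ℝ v := EuclideanSpace.orthonormal_single.comp _ (Fin.castLE_injective _)
  let a : Metric.sphere (0 : EuclideanSpace ℝ (Fin (n + 1))) 1 := ⟨v 0, by simp [hv.1 0]⟩
  let b : Metric.sphere (0 : EuclideanSpace ℝ (Fin (n + 1))) 1 := ⟨-v 0, by simp [hv.1 0]⟩
  let c : Metric.sphere (0 : EuclideanSpace ℝ (Fin (n + 1))) 1 := ⟨v 1, by simp [hv.1 1]⟩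
  let d : Metric.sphere (0 : EuclideanSpace ℝ (Fin (n + 1))) 1 := ⟨v 2, by simp [hv.1 2]⟩
  have hab : a ≠ b := Subtype.coe_ne_coe.1 (hv.ne_neg 0 0)
  have hac : a ≠ c := Subtype.coe_ne_coe.1 (hv.linearIndependent.injective.ne (by decide))
  have had : a ≠ d := Subtype.coe_ne_coe.1 (hv.linearIndependent.injective.ne (by decide))
  have hbc : b ≠ c := Subtype.coe_ne_coe.1 (hv.ne_neg 1 0).symm
  have hbd : b ≠ d := Subtype.coe_ne_coe.1 (hv.ne_neg 2 0).symm
  have hcd : c ≠ d := Subtype.coe_ne_coe.1 (hv.linearIndependent.injective.ne (by decide))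
  refine ⟨fun p => poleMeridianMap a b c d p, fun A hA _ => ?_, ?_, ?_⟩
  · obtain ⟨s, hs, hmaps⟩ := poleMeridianMap_image_subset_triple a b c d hA
    obtain ⟨A', hA', hsA'⟩ := exists_isCirclePlane_of_mem_triples hab hac had hbc hbd hcd hs
    exact ⟨A', hA'.1, hA'.2, fun p hp => hsA' _ (hmaps p hp (by simp))⟩
  · rw [range_poleMeridianMap, Set.encard_eq_four]
    exact ⟨a, b, c, d, hab, hac, had, hbc, hbd, hcd, rfl⟩
  · rintro ⟨A', hA', -, hall⟩
    have hmem : ∀ z ∈ ({a, b, c, d} : Set _), (z : EuclideanSpace ℝ (Fin (n + 1))) ∈ A' := by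
      rw [← range_poleMeridianMap]
      rintro _ ⟨p, rfl⟩
      exact hall p
    have := hv.three_le_finrank_direction (hmem a (by simp)) (hmem b (by simp)) (hmem c (by simp))
      (hmem d (by simp))
    omega
end

section
/- Under the inversive-plane setup below, each of the sets X₄ and X₅ contains both a positive and a negative real number, and each of the sets Y₂ and Y₃ contains both a positive and a negative real number; equivalently, colors 4 and 5 each occur on both sides of the origin on the X-axis, and colors 2 and 3 each occur on both sides of the origin on ℓ. -/
open OnePoint

/-- A generalized circle in the inversive plane `ℝ² ∪ {∞}` (modeled as `OnePoint ℂ`):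
either a Euclidean circle, or an affine line together with the point at infinity. -/
def IsGenCircle (S : Set (OnePoint ℂ)) : Prop :=
  (∃ c : ℂ, ∃ r : ℝ, 0 < r ∧
      S = (fun z : ℂ => (z : OnePoint ℂ)) '' {z : ℂ | ‖z - c‖ = r}) ∨
  (∃ z₀ e : ℂ, e ≠ 0 ∧
      S = (fun z : ℂ => (z : OnePoint ℂ)) '' {z : ℂ | ∃ t : ℝ, z = z₀ + (t : ℂ) * e} ∪ {∞})

/-- The signed norm on `ℝ² ≅ ℂ`. -/
noncomputable def signedNorm (z : ℂ) : ℝ :=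
  if 0 < z.im ∨ (z.im = 0 ∧ 0 ≤ z.re) then ‖z‖ else -‖z‖

/-- The set of signed norms of points of the `X`-axis having color `i`. -/
noncomputable def xAxisColorSet (Γ : OnePoint ℂ → ℕ) (i : ℕ) : Set ℝ :=
  signedNorm '' {z : ℂ | z.im = 0 ∧ Γ (z : OnePoint ℂ) = i}

/-- The set of signed norms of points of the line through the origin with direction `d`
having color `j`. -/
noncomputable def lineColorSet (Γ : OnePoint ℂ → ℕ) (d : ℂ) (j : ℕ) : Set ℝ :=
  signedNorm '' {z : ℂ | (∃ t : ℝ, z = (t : ℂ) * d) ∧ Γ (z : OnePoint ℂ) = j}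

/-!
If `s d₁` and `t d₁` lie on opposite sides of the origin on one line and `x d₂ ≠ 0` lies on
another line through the origin, there is a circle through these three points; the origin is
inside it, so (power of a point) the circle meets the second line again at some `x' d₂` with
`x x' < 0`. When the three points carry three distinct colors, the circle carries no other
color, so if the colors of the second line avoid those of the first two points, `x' d₂` has
the color of `x d₂`.

Applied to the colors `4` and `5` at `a < 0` and `1` on the `X`-axis, this shows that `2` and
`3` occur on both sides of the origin on `ℓ`; then some point of color `2` and some point of
color `3` lie on opposite sides on `ℓ`, and the same argument with the two lines exchanged
gives `4` and `5` on both sides on the `X`-axis.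
-/

open scoped RealInnerProductSpace

theorem norm_smul_sub_sq_of_two_inner_eq {E : Type*} [NormedAddCommGroup E]
    [InnerProductSpace ℝ E] {e c : E} {u v : ℝ} (h : 2 * ⟪e, c⟫ = (u + v) * ‖e‖ ^ 2) :
    ‖u • e - c‖ ^ 2 = ‖c‖ ^ 2 - u * v * ‖e‖ ^ 2 := by
  rw [norm_sub_sq_real, norm_smul, real_inner_smul_left, mul_pow, Real.norm_eq_abs, sq_abs]
  linear_combination (-u) * h

theorem Complex.exists_inner_eq_and_inner_eq {d₁ d₂ : ℂ}
    (hD : d₁.re * d₂.im ≠ d₁.im * d₂.re) (α β : ℝ) :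
    ∃ c : ℂ, ⟪d₁, c⟫ = α ∧ ⟪d₂, c⟫ = β := by
  set D := d₁.re * d₂.im - d₁.im * d₂.re
  have hD' : D ≠ 0 := sub_ne_zero.2 hD
  refine ⟨⟨(α * d₂.im - β * d₁.im) / D, (β * d₁.re - α * d₂.re) / D⟩, ?_, ?_⟩ <;>
  · simp only [Complex.inner, Complex.mul_re, Complex.conj_re, Complex.conj_im]
    field_simp
    ring

theorem exists_circle_through_of_mul_neg {d₁ d₂ : ℂ} (hD : d₁.re * d₂.im ≠ d₁.im * d₂.re)
    {s t x : ℝ} (hst : s * t < 0) (hx : x ≠ 0) :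
    ∃ x' : ℝ, x * x' < 0 ∧ ∃ S : Set (OnePoint ℂ), IsGenCircle S ∧
      ((s * d₁ : ℂ) : OnePoint ℂ) ∈ S ∧ ((t * d₁ : ℂ) : OnePoint ℂ) ∈ S ∧
      ((x * d₂ : ℂ) : OnePoint ℂ) ∈ S ∧ ((x' * d₂ : ℂ) : OnePoint ℂ) ∈ S := by
  have hd₁ : d₁ ≠ 0 := by rintro rfl; simp at hD
  have hd₂ : d₂ ≠ 0 := by rintro rfl; simp at hD
  have hn₂ : 0 < ‖d₂‖ ^ 2 := by positivity
  have hpow_neg : s * t * ‖d₁‖ ^ 2 < 0 := mul_neg_of_neg_of_pos hst (by positivity)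
  -- power of the origin with respect to the circle: `s t ‖d₁‖² = x x' ‖d₂‖² < 0`
  set x' := s * t * ‖d₁‖ ^ 2 / (x * ‖d₂‖ ^ 2)
  have hpow : x * x' * ‖d₂‖ ^ 2 = s * t * ‖d₁‖ ^ 2 := by simp only [x']; field_simp
  have hxx' : x * x' < 0 := neg_of_mul_neg_left (hpow ▸ hpow_neg) hn₂.le
  obtain ⟨c, hc₁, hc₂⟩ := Complex.exists_inner_eq_and_inner_eq hD
    ((s + t) * ‖d₁‖ ^ 2 / 2) ((x + x') * ‖d₂‖ ^ 2 / 2)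
  set ρ := ‖c‖ ^ 2 - s * t * ‖d₁‖ ^ 2
  have mem : ∀ (u : ℝ) (e : ℂ), ‖u • e - c‖ ^ 2 = ρ →
      ((u * e : ℂ) : OnePoint ℂ) ∈ (↑) '' {z : ℂ | ‖z - c‖ = √ρ} := fun u e h =>
    ⟨u * e, by show ‖_‖ = _; rw [← h, Real.sqrt_sq (norm_nonneg _), Complex.real_smul], rfl⟩
  refine ⟨x', hxx', _, Or.inl ⟨c, √ρ, Real.sqrt_pos.2 (by linarith [sq_nonneg ‖c‖]), rfl⟩,
    mem _ _ ?_, mem _ _ ?_, mem _ _ ?_, mem _ _ ?_⟩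
  · rw [norm_smul_sub_sq_of_two_inner_eq (v := t) (by linarith)]
  · rw [norm_smul_sub_sq_of_two_inner_eq (v := s) (by linarith)]; ring
  · rw [norm_smul_sub_sq_of_two_inner_eq (v := x') (by linarith), hpow]
  · rw [norm_smul_sub_sq_of_two_inner_eq (v := x) (by linarith), mul_comm x', hpow]

theorem signedNorm_neg (z : ℂ) : signedNorm (-z) = -signedNorm z := by
  unfold signedNorm
  simp only [Complex.neg_im, Complex.neg_re, norm_neg]
  split_ifs with h₁ h₂ h₂
  · obtain rfl : z = 0 := Complex.ext (by simp only [Complex.zero_re]; grind)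
      (by simp only [Complex.zero_im]; grind)
    simp
  · rw [neg_neg]
  · rfl
  · grind

theorem signedNorm_real_mul_of_pos {t : ℝ} (ht : 0 < t) (z : ℂ) :
    signedNorm (t * z) = t * signedNorm z := by
  simp [signedNorm, Complex.mul_re, Complex.mul_im, mul_pos_iff_of_pos_left ht,
    mul_nonneg_iff_of_pos_left ht, ht.ne', abs_of_pos ht, apply_ite (t * ·)]

theorem signedNorm_real_mul (t : ℝ) (z : ℂ) : signedNorm (t * z) = t * signedNorm z := by
  rcases lt_trichotomy t 0 with ht | rfl | ht
  · have := signedNorm_real_mul_of_pos (neg_pos.2 ht) z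
    rw [Complex.ofReal_neg, neg_mul, signedNorm_neg, neg_mul, neg_inj] at this
    exact this
  · simp [signedNorm]
  · exact signedNorm_real_mul_of_pos ht z

theorem abs_signedNorm (z : ℂ) : |signedNorm z| = ‖z‖ := by
  unfold signedNorm; split_ifs <;> simp

theorem Set.image_eq_of_ncard_image_le_three {α β : Type*} {Γ : α → β} {S : Set α}
    (hfin : (Γ '' S).Finite) (hS : (Γ '' S).ncard ≤ 3) {p₁ p₂ p₃ : α}
    (h₁ : p₁ ∈ S) (h₂ : p₂ ∈ S) (h₃ : p₃ ∈ S)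
    (h₁₂ : Γ p₁ ≠ Γ p₂) (h₁₃ : Γ p₁ ≠ Γ p₃) (h₂₃ : Γ p₂ ≠ Γ p₃) :
    Γ '' S = {Γ p₁, Γ p₂, Γ p₃} := by
  refine (Set.eq_of_subset_of_ncard_le ?_ ?_ hfin).symm
  · simp only [Set.insert_subset_iff, Set.singleton_subset_iff]
    exact ⟨Set.mem_image_of_mem Γ h₁, Set.mem_image_of_mem Γ h₂, Set.mem_image_of_mem Γ h₃⟩
  · rwa [Set.ncard_eq_three.2 ⟨_, _, _, h₁₂, h₁₃, h₂₃, rfl⟩]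

theorem mul_mul_mul_self_neg {p q r : ℝ} (hpq : p * q < 0) (hr : r ≠ 0) :
    p * r * (q * r) < 0 := by
  rw [mul_mul_mul_comm]; exact mul_neg_of_neg_of_pos hpq (mul_self_pos.2 hr)

section Coloring

variable {β : Type*} {Γ : OnePoint ℂ → β}

def OccursOnBothSides (Γ : OnePoint ℂ → β) (d : ℂ) (j : β) : Prop :=
  ∃ p q : ℝ, p * q < 0 ∧ Γ ((p * d : ℂ) : OnePoint ℂ) = j ∧ Γ ((q * d : ℂ) : OnePoint ℂ) = j

theorem occursOnBothSides_of_circle {C : Set β} (hfin : (Set.range Γ).Finite)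
    (h3 : ∀ S : Set (OnePoint ℂ), IsGenCircle S → (Γ '' S).ncard ≤ 3)
    {d₁ d₂ : ℂ} (hD : d₁.re * d₂.im ≠ d₁.im * d₂.re)
    (hC : ∀ y : ℝ, Γ ((y * d₂ : ℂ) : OnePoint ℂ) ∈ C) {s t x : ℝ} (hst : s * t < 0) (hx : x ≠ 0)
    (hs : Γ ((s * d₁ : ℂ) : OnePoint ℂ) ∉ C) (ht : Γ ((t * d₁ : ℂ) : OnePoint ℂ) ∉ C)
    (hne : Γ ((s * d₁ : ℂ) : OnePoint ℂ) ≠ Γ ((t * d₁ : ℂ) : OnePoint ℂ)) :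
    OccursOnBothSides Γ d₂ (Γ ((x * d₂ : ℂ) : OnePoint ℂ)) := by
  obtain ⟨x', hxx', S, hS, hs_mem, ht_mem, hx_mem, hx'_mem⟩ :=
    exists_circle_through_of_mul_neg hD hst hx
  have hcolors := Set.image_eq_of_ncard_image_le_three (hfin.subset (Set.image_subset_range _ _))
    (h3 S hS) hs_mem ht_mem hx_mem hne (fun h => hs (h ▸ hC x)) (fun h => ht (h ▸ hC x))
  have hx' : Γ ((x' * d₂ : ℂ) : OnePoint ℂ) ∈ Γ '' S := Set.mem_image_of_mem Γ hx'_mem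
  rw [hcolors] at hx'
  obtain h | h | h := hx'
  · exact absurd (h ▸ hC x') hs
  · exact absurd (h ▸ hC x') ht
  · exact ⟨x, x', hxx', rfl, h⟩

theorem OccursOnBothSides.exists_mul_neg {d : ℂ} {j k : β} (hj : OccursOnBothSides Γ d j)
    (hk : OccursOnBothSides Γ d k) :
    ∃ u v : ℝ, u * v < 0 ∧
      Γ ((u * d : ℂ) : OnePoint ℂ) = j ∧ Γ ((v * d : ℂ) : OnePoint ℂ) = k := by
  obtain ⟨p, q, hpq, hp, hq⟩ := hj
  obtain ⟨r, r', hrr', hr, -⟩ := hk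
  have hr0 : r ≠ 0 := left_ne_zero_of_mul hrr'.ne
  rcases mul_neg_iff.1 (mul_mul_mul_self_neg hpq hr0) with ⟨-, h⟩ | ⟨h, -⟩
  · exact ⟨q, r, h, hq, hr⟩
  · exact ⟨p, r, h, hp, hr⟩

theorem exists_ne_zero_of_mem_image_line {d : ℂ} {j : β}
    (hj : j ∈ Γ '' ((↑) '' {z : ℂ | ∃ t : ℝ, z = t * d} ∪ {∞}))
    (h0 : Γ ((0 : ℂ) : OnePoint ℂ) ≠ j) (hinf : Γ ∞ ≠ j) :
    ∃ u : ℝ, u ≠ 0 ∧ Γ ((u * d : ℂ) : OnePoint ℂ) = j := by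
  obtain ⟨w, ⟨z, ⟨u, rfl⟩, rfl⟩ | rfl, hw⟩ := hj
  · refine ⟨u, ?_, hw⟩
    rintro rfl
    exact h0 (by simpa using hw)
  · exact absurd hw hinf

end Coloring

theorem xAxisColorSet_eq_lineColorSet_one (Γ : OnePoint ℂ → ℕ) (i : ℕ) :
    xAxisColorSet Γ i = lineColorSet Γ 1 i := by
  have h (z : ℂ) : z.im = 0 ↔ ∃ t : ℝ, z = t * 1 :=
    ⟨fun h => ⟨z.re, by simp [Complex.ext_iff, h]⟩, by rintro ⟨t, rfl⟩; simp⟩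
  simp only [xAxisColorSet, lineColorSet, h]

theorem OccursOnBothSides.exists_pos_and_neg {Γ : OnePoint ℂ → ℕ} {d : ℂ} {j : ℕ}
    (h : OccursOnBothSides Γ d j) (hd : d ≠ 0) :
    (∃ b ∈ lineColorSet Γ d j, 0 < b) ∧ (∃ b ∈ lineColorSet Γ d j, b < 0) := by
  obtain ⟨p, q, hpq, hp, hq⟩ := h
  have hσ : signedNorm d ≠ 0 := by
    rw [← abs_ne_zero, abs_signedNorm]; exact norm_ne_zero_iff.2 hd
  have hmem (u : ℝ) (hu : Γ ((u * d : ℂ) : OnePoint ℂ) = j) :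
      u * signedNorm d ∈ lineColorSet Γ d j := ⟨u * d, ⟨⟨u, rfl⟩, hu⟩, signedNorm_real_mul u d⟩
  rcases mul_neg_iff.1 (mul_mul_mul_self_neg hpq hσ) with ⟨h₁, h₂⟩ | ⟨h₁, h₂⟩
  · exact ⟨⟨_, hmem p hp, h₁⟩, ⟨_, hmem q hq, h₂⟩⟩
  · exact ⟨⟨_, hmem q hq, h₂⟩, ⟨_, hmem p hp, h₁⟩⟩

/-- Claim 1 of the `n = 2` proof: colors 4 and 5 occur on both sides of the origin on the
`X`-axis, and colors 2 and 3 occur on both sides of the origin on the line `ℓ`. -/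
theorem colors_on_both_sides
    (Γ : OnePoint ℂ → ℕ)
    (hrange : Set.range Γ = {1, 2, 3, 4, 5})
    (h3 : ∀ S : Set (OnePoint ℂ), IsGenCircle S → (Γ '' S).ncard ≤ 3)
    (h0 : Γ ((0 : ℂ) : OnePoint ℂ) = 1) (hinf : Γ ∞ = 1)
    (h1 : Γ ((1 : ℂ) : OnePoint ℂ) = 5)
    (hneg : ∃ x : ℝ, x < 0 ∧ Γ (((x : ℂ)) : OnePoint ℂ) = 4)
    (hX : Γ '' ((fun z : ℂ => (z : OnePoint ℂ)) '' {z : ℂ | z.im = 0} ∪ {∞}) = {1, 4, 5})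
    (d : ℂ) (hd : d ≠ 0) (hdim : d.im ≠ 0)
    (hL : Γ '' ((fun z : ℂ => (z : OnePoint ℂ)) '' {z : ℂ | ∃ t : ℝ, z = (t : ℂ) * d} ∪ {∞}) =
      {1, 2, 3}) :
    ((∃ a ∈ xAxisColorSet Γ 4, 0 < a) ∧ (∃ a ∈ xAxisColorSet Γ 4, a < 0)) ∧
    ((∃ a ∈ xAxisColorSet Γ 5, 0 < a) ∧ (∃ a ∈ xAxisColorSet Γ 5, a < 0)) ∧
    ((∃ b ∈ lineColorSet Γ d 2, 0 < b) ∧ (∃ b ∈ lineColorSet Γ d 2, b < 0)) ∧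
    ((∃ b ∈ lineColorSet Γ d 3, 0 < b) ∧ (∃ b ∈ lineColorSet Γ d 3, b < 0)) := by
  have hfin : (Set.range Γ).Finite := hrange ▸ Set.toFinite _
  have hXcol (y : ℝ) : Γ ((y * 1 : ℂ) : OnePoint ℂ) ∈ ({1, 4, 5} : Set ℕ) :=
    hX ▸ Set.mem_image_of_mem Γ (Or.inl ⟨_, by simp, rfl⟩)
  have hLcol (y : ℝ) : Γ ((y * d : ℂ) : OnePoint ℂ) ∈ ({1, 2, 3} : Set ℕ) :=
    hL ▸ Set.mem_image_of_mem Γ (Or.inl ⟨_, ⟨y, rfl⟩, rfl⟩)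
  obtain ⟨a, ha, ha4⟩ := hneg
  have hLboth (j : ℕ) (hj : j = 2 ∨ j = 3) : OccursOnBothSides Γ d j := by
    obtain ⟨u, hu, rfl⟩ := exists_ne_zero_of_mem_image_line (j := j) (by rw [hL]; grind)
      (by grind) (by grind)
    exact occursOnBothSides_of_circle (d₁ := 1) (s := a) (t := 1) hfin h3
      (by simpa using hdim) hLcol (mul_neg_of_neg_of_pos ha one_pos) hu
      (by simp [ha4]) (by simp [h1]) (by simp [ha4, h1])
  obtain ⟨u, v, huv, hu, hv⟩ := (hLboth 2 (by simp)).exists_mul_neg (hLboth 3 (by simp))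
  have hXboth (x : ℝ) (hx : x ≠ 0) : OccursOnBothSides Γ 1 (Γ ((x : ℂ) : OnePoint ℂ)) := by
    simpa using occursOnBothSides_of_circle (d₁ := d) hfin h3
      (by simpa using hdim.symm) hXcol huv hx (by simp [hu]) (by simp [hv]) (by simp [hu, hv])
  simp only [xAxisColorSet_eq_lineColorSet_one]
  exact ⟨(ha4 ▸ hXboth a ha.ne).exists_pos_and_neg one_ne_zero,
    (by simpa [h1] using hXboth 1 one_ne_zero : OccursOnBothSides Γ 1 5).exists_pos_and_neg
      one_ne_zero,
    (hLboth 2 (by simp)).exists_pos_and_neg hd, (hLboth 3 (by simp)).exists_pos_and_neg hd⟩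
end

section
/- Under the inversive-plane setup below, for each i ∈ {4,5}: if x ∈ X_i, y₂ ∈ Y₂ and y₃ ∈ Y₃, then y₂·y₃/x ∈ X_i. Similarly, for each j ∈ {2,3}: if y ∈ Y_j, x₄ ∈ X₄ and x₅ ∈ X₅, then x₄·x₅/y ∈ Y_j. -/
open OnePoint

/-!
If `x * x' = t * t' * ‖d‖ ^ 2`, the real points `x, x'` and the points `t • d, t' • d` of the
line `ℝ • d` are concyclic (converse of the power of a point); in signed norms this is
`x * x' = y * y'`. A circle carries at most three colors. For the first claim the circle through
`x, y₂, y₃` and `y₂ * y₃ / x` already carries the colors `i, 2, 3`, and its fourth point lies on the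
`X`-axis, whose colors are `1, 4, 5`; so that point has color `i`. The second claim is symmetric.
-/

lemma signedNorm_ofReal (x : ℝ) : signedNorm (x : ℂ) = x := by
  rcases le_or_gt 0 x with h | h
  · simp [signedNorm, h, abs_of_nonneg h]
  · simp [signedNorm, h.not_ge, abs_of_neg h]

lemma signedNorm_of_im_pos {z : ℂ} (h : 0 < z.im) : signedNorm z = ‖z‖ :=
  if_pos (Or.inl h)

lemma signedNorm_of_im_neg {z : ℂ} (h : z.im < 0) : signedNorm z = -‖z‖ :=
  if_neg (by simp [h.not_gt, h.ne])

lemma sq_signedNorm (z : ℂ) : signedNorm z ^ 2 = ‖z‖ ^ 2 := by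
  unfold signedNorm
  split_ifs <;> ring

lemma signedNorm_ne_zero {z : ℂ} (hz : z ≠ 0) : signedNorm z ≠ 0 := by
  intro h
  simpa [h, eq_comm, hz] using sq_signedNorm z

lemma signedNorm_ofReal_mul (t : ℝ) {w : ℂ} (hw : w.im ≠ 0) :
    signedNorm ((t : ℂ) * w) = t * signedNorm w := by
  have him : ((t : ℂ) * w).im = t * w.im := by simp
  have hnorm : ‖(t : ℂ) * w‖ = |t| * ‖w‖ := by simp
  rcases eq_or_ne t 0 with rfl | ht
  · simp [signedNorm]
  rcases ht.lt_or_gt with ht | ht <;> rcases hw.lt_or_gt with hw' | hw'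
  · rw [signedNorm_of_im_pos (by rw [him]; nlinarith), signedNorm_of_im_neg hw', hnorm,
      abs_of_neg ht]; ring
  · rw [signedNorm_of_im_neg (by rw [him]; nlinarith), signedNorm_of_im_pos hw', hnorm,
      abs_of_neg ht]; ring
  · rw [signedNorm_of_im_neg (by rw [him]; nlinarith), signedNorm_of_im_neg hw', hnorm,
      abs_of_pos ht]; ring
  · rw [signedNorm_of_im_pos (by rw [him]; nlinarith), signedNorm_of_im_pos hw', hnorm,
      abs_of_pos ht]

lemma mem_xAxisColorSet {Γ : OnePoint ℂ → ℕ} {i : ℕ} {v : ℝ} :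
    v ∈ xAxisColorSet Γ i ↔ Γ ((v : ℂ) : OnePoint ℂ) = i := by
  constructor
  · rintro ⟨z, ⟨him, hΓ⟩, rfl⟩
    rw [← Complex.re_add_im z, him] at hΓ ⊢
    simpa [signedNorm_ofReal] using hΓ
  · exact fun h => ⟨v, ⟨Complex.ofReal_im v, h⟩, signedNorm_ofReal v⟩

lemma mem_lineColorSet {Γ : OnePoint ℂ → ℕ} {d : ℂ} (hd : d.im ≠ 0) {j : ℕ} {v : ℝ} :
    v ∈ lineColorSet Γ d j ↔ Γ ((((v / signedNorm d : ℝ) : ℂ) * d : ℂ) : OnePoint ℂ) = j := by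
  have hs : signedNorm d ≠ 0 := signedNorm_ne_zero (fun h => hd (by simp [h]))
  constructor
  · rintro ⟨_, ⟨⟨t, rfl⟩, hΓ⟩, rfl⟩
    rwa [signedNorm_ofReal_mul t hd, mul_div_cancel_right₀ t hs]
  · exact fun h => ⟨_, ⟨⟨_, rfl⟩, h⟩, by rw [signedNorm_ofReal_mul _ hd, div_mul_cancel₀ v hs]⟩

/-- The converse of the power of a point theorem, for two lines through the origin. -/
lemma exists_genCircle_mem_of_mul_eq {d : ℂ} (hd : d.im ≠ 0) {x x' t t' : ℝ} (hx : x ≠ 0)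
    (h : x * x' = t * t' * ‖d‖ ^ 2) :
    ∃ S, IsGenCircle S ∧ ((x : ℂ) : OnePoint ℂ) ∈ S ∧ ((x' : ℂ) : OnePoint ℂ) ∈ S ∧
      (((t : ℂ) * d : ℂ) : OnePoint ℂ) ∈ S ∧ (((t' : ℂ) * d : ℂ) : OnePoint ℂ) ∈ S := by
  have hd2 : ‖d‖ ^ 2 = d.re ^ 2 + d.im ^ 2 := by rw [Complex.sq_norm, Complex.normSq_apply]; ring
  -- `c` lies on the perpendicular bisector of `x, x'`; its height makes the circle meet `ℝ • d`
  -- at parameters with sum `t + t'`, and the product `t * t'` is then forced by `h`.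
  set c : ℂ := ⟨(x + x') / 2, ((t + t') * ‖d‖ ^ 2 / 2 - d.re * ((x + x') / 2)) / d.im⟩
  have hsq : ∀ z : ℂ, ‖z - c‖ ^ 2 = (z.re - c.re) ^ 2 + (z.im - c.im) ^ 2 := fun z => by
    rw [Complex.sq_norm, Complex.normSq_apply]; simp only [Complex.sub_re, Complex.sub_im]; ring
  have on_circle : ∀ z : ℂ, ‖z - c‖ ^ 2 = ‖(x : ℂ) - c‖ ^ 2 → ‖z - c‖ = ‖(x : ℂ) - c‖ :=
    fun z hz => (pow_left_inj₀ (norm_nonneg _) (norm_nonneg _) two_ne_zero).mp hz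
  have hx' : ‖(x' : ℂ) - c‖ = ‖(x : ℂ) - c‖ := on_circle _ (by simp only [hsq, c]; simp; ring)
  have hline : ∀ s : ℝ, s * (t + t' - s) * ‖d‖ ^ 2 = x * x' →
      ‖(s : ℂ) * d - c‖ = ‖(x : ℂ) - c‖ := fun s hs => on_circle _ (by
    simp only [hsq, c]
    simp only [Complex.mul_re, Complex.mul_im, Complex.ofReal_re, Complex.ofReal_im]
    field_simp
    linear_combination (-4 * d.im ^ 2) * hs - (4 * s ^ 2 * d.im ^ 2) * hd2)
  have ht : ‖(t : ℂ) * d - c‖ = ‖(x : ℂ) - c‖ := hline t (by rw [h]; ring)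
  have ht' : ‖(t' : ℂ) * d - c‖ = ‖(x : ℂ) - c‖ := hline t' (by rw [h]; ring)
  have hr : 0 < ‖(x : ℂ) - c‖ := by
    refine norm_pos_iff.mpr fun hxc => hx ?_
    have htc : (t : ℂ) * d = c := sub_eq_zero.mp (norm_eq_zero.mp (ht.trans (norm_eq_zero.mpr hxc)))
    have htx : (t : ℂ) * d = x := htc.trans (sub_eq_zero.mp hxc).symm
    have him := congrArg Complex.im htx
    simp only [Complex.mul_im, Complex.ofReal_re, Complex.ofReal_im, zero_mul, add_zero] at him
    rw [← Complex.ofReal_inj, ← htx, (mul_eq_zero.mp him).resolve_right hd]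
    simp
  exact ⟨_, Or.inl ⟨c, _, hr, rfl⟩, ⟨_, rfl, rfl⟩, ⟨_, hx', rfl⟩, ⟨_, ht, rfl⟩, ⟨_, ht', rfl⟩⟩

lemma apply_eq_of_ncard_image_le_three {α β : Type*} {f : α → β} {S : Set α}
    (hfin : (f '' S).Finite) (hcard : (f '' S).ncard ≤ 3) {a b c e : α}
    (ha : a ∈ S) (hb : b ∈ S) (hc : c ∈ S) (he : e ∈ S)
    (hab : f a ≠ f b) (hac : f a ≠ f c) (hbc : f b ≠ f c) (heb : f e ≠ f b) (hec : f e ≠ f c) :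
    f e = f a := by
  have hsub : {f a, f b, f c} ⊆ f '' S := by
    rintro _ (rfl | rfl | rfl)
    exacts [⟨a, ha, rfl⟩, ⟨b, hb, rfl⟩, ⟨c, hc, rfl⟩]
  have hthree : ({f a, f b, f c} : Set β).ncard = 3 :=
    Set.ncard_eq_three.mpr ⟨_, _, _, hab, hac, hbc, rfl⟩
  have hmem : f e ∈ ({f a, f b, f c} : Set β) := by
    rw [Set.eq_of_subset_of_ncard_le hsub (hthree ▸ hcard) hfin]
    exact ⟨e, he, rfl⟩
  simpa [heb, hec] using hmem

lemma div_mem_xAxisColorSet {Γ : OnePoint ℂ → ℕ} (hfin : ∀ S, (Γ '' S).Finite)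
    (h3 : ∀ S, IsGenCircle S → (Γ '' S).ncard ≤ 3) (h0 : Γ ((0 : ℂ) : OnePoint ℂ) = 1)
    (haxis : ∀ v : ℝ, Γ ((v : ℂ) : OnePoint ℂ) ∈ ({1, 4, 5} : Set ℕ))
    {d : ℂ} (hd : d.im ≠ 0) {i : ℕ} (hi : i = 4 ∨ i = 5) {x y₂ y₃ : ℝ}
    (hx : x ∈ xAxisColorSet Γ i) (hy₂ : y₂ ∈ lineColorSet Γ d 2)
    (hy₃ : y₃ ∈ lineColorSet Γ d 3) :
    y₂ * y₃ / x ∈ xAxisColorSet Γ i := by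
  rw [mem_xAxisColorSet] at hx ⊢
  rw [mem_lineColorSet hd] at hy₂ hy₃
  have hs : signedNorm d ≠ 0 := signedNorm_ne_zero (fun h => hd (by simp [h]))
  have hx0 : x ≠ 0 := by rintro rfl; simp only [Complex.ofReal_zero, h0] at hx; omega
  obtain ⟨S, hS, hxS, hx'S, h₂S, h₃S⟩ := exists_genCircle_mem_of_mul_eq hd hx0
    (x' := y₂ * y₃ / x) (t := y₂ / signedNorm d) (t' := y₃ / signedNorm d)
    (by rw [← sq_signedNorm]; field_simp)
  have hx' := haxis (y₂ * y₃ / x)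
  simp only [Set.mem_insert_iff, Set.mem_singleton_iff] at hx'
  rw [← hx]
  exact apply_eq_of_ncard_image_le_three (hfin S) (h3 S hS) hxS h₂S h₃S hx'S
    (by omega) (by omega) (by omega) (by omega) (by omega)

lemma div_mem_lineColorSet {Γ : OnePoint ℂ → ℕ} (hfin : ∀ S, (Γ '' S).Finite)
    (h3 : ∀ S, IsGenCircle S → (Γ '' S).ncard ≤ 3) (h0 : Γ ((0 : ℂ) : OnePoint ℂ) = 1)
    {d : ℂ} (hd : d.im ≠ 0)
    (hline : ∀ t : ℝ, Γ (((t : ℂ) * d : ℂ) : OnePoint ℂ) ∈ ({1, 2, 3} : Set ℕ))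
    {j : ℕ} (hj : j = 2 ∨ j = 3) {y x₄ x₅ : ℝ} (hy : y ∈ lineColorSet Γ d j)
    (hx₄ : x₄ ∈ xAxisColorSet Γ 4) (hx₅ : x₅ ∈ xAxisColorSet Γ 5) :
    x₄ * x₅ / y ∈ lineColorSet Γ d j := by
  rw [mem_lineColorSet hd] at hy ⊢
  rw [mem_xAxisColorSet] at hx₄ hx₅
  have hs : signedNorm d ≠ 0 := signedNorm_ne_zero (fun h => hd (by simp [h]))
  have hy0 : y ≠ 0 := by
    rintro rfl; simp only [zero_div, Complex.ofReal_zero, zero_mul, h0] at hy; omega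
  have hx0 : x₄ ≠ 0 := by rintro rfl; simp only [Complex.ofReal_zero, h0] at hx₄; omega
  obtain ⟨S, hS, h₄S, h₅S, hyS, hy'S⟩ := exists_genCircle_mem_of_mul_eq hd hx0
    (x' := x₅) (t := y / signedNorm d) (t' := x₄ * x₅ / y / signedNorm d)
    (by rw [← sq_signedNorm]; field_simp)
  have hy' := hline (x₄ * x₅ / y / signedNorm d)
  simp only [Set.mem_insert_iff, Set.mem_singleton_iff] at hy'
  rw [← hy]
  exact apply_eq_of_ncard_image_le_three (hfin S) (h3 S hS) hyS h₄S h₅S hy'S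
    (by omega) (by omega) (by omega) (by omega) (by omega)

theorem function_h_claim_general
    (Γ : OnePoint ℂ → ℕ)
    (hrange : Set.range Γ = {1, 2, 3, 4, 5})
    (h3 : ∀ S : Set (OnePoint ℂ), IsGenCircle S → (Γ '' S).ncard ≤ 3)
    (h0 : Γ ((0 : ℂ) : OnePoint ℂ) = 1)
    (hX : Γ '' ((fun z : ℂ => (z : OnePoint ℂ)) '' {z : ℂ | z.im = 0} ∪ {∞}) = {1, 4, 5})
    (d : ℂ) (hdim : d.im ≠ 0)
    (hL : Γ '' ((fun z : ℂ => (z : OnePoint ℂ)) '' {z : ℂ | ∃ t : ℝ, z = (t : ℂ) * d} ∪ {∞}) =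
      {1, 2, 3}) :
    (∀ i ∈ ({4, 5} : Set ℕ), ∀ x ∈ xAxisColorSet Γ i,
      ∀ y₂ ∈ lineColorSet Γ d 2, ∀ y₃ ∈ lineColorSet Γ d 3,
        y₂ * y₃ / x ∈ xAxisColorSet Γ i) ∧
    (∀ j ∈ ({2, 3} : Set ℕ), ∀ y ∈ lineColorSet Γ d j,
      ∀ x₄ ∈ xAxisColorSet Γ 4, ∀ x₅ ∈ xAxisColorSet Γ 5,
        x₄ * x₅ / y ∈ lineColorSet Γ d j) := by
  have hfin : ∀ S, (Γ '' S).Finite := fun S =>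
    (Set.toFinite _).subset (hrange ▸ Set.image_subset_range Γ S)
  have haxis : ∀ v : ℝ, Γ ((v : ℂ) : OnePoint ℂ) ∈ ({1, 4, 5} : Set ℕ) := fun v =>
    hX ▸ ⟨_, Or.inl ⟨v, Complex.ofReal_im v, rfl⟩, rfl⟩
  have hline : ∀ t : ℝ, Γ (((t : ℂ) * d : ℂ) : OnePoint ℂ) ∈ ({1, 2, 3} : Set ℕ) := fun t =>
    hL ▸ ⟨_, Or.inl ⟨_, ⟨t, rfl⟩, rfl⟩, rfl⟩
  exact ⟨fun i hi x hx y₂ hy₂ y₃ hy₃ => div_mem_xAxisColorSet hfin h3 h0 haxis hdim hi hx hy₂ hy₃,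
    fun j hj y hy x₄ hx₄ x₅ hx₅ => div_mem_lineColorSet hfin h3 h0 hdim hline hj hy hx₄ hx₅⟩

/-- Claim 2 of the `n = 2` proof: for `i ∈ {4,5}`, `x ∈ Xᵢ`, `y₂ ∈ Y₂`, `y₃ ∈ Y₃`,
we have `y₂·y₃/x ∈ Xᵢ`; and for `j ∈ {2,3}`, `y ∈ Y_j`, `x₄ ∈ X₄`, `x₅ ∈ X₅`,
we have `x₄·x₅/y ∈ Y_j`. -/
theorem function_h_claim
    (Γ : OnePoint ℂ → ℕ)
    (hrange : Set.range Γ = {1, 2, 3, 4, 5})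
    (h3 : ∀ S : Set (OnePoint ℂ), IsGenCircle S → (Γ '' S).ncard ≤ 3)
    (h0 : Γ ((0 : ℂ) : OnePoint ℂ) = 1) (hinf : Γ ∞ = 1)
    (h1 : Γ ((1 : ℂ) : OnePoint ℂ) = 5)
    (hneg : ∃ x : ℝ, x < 0 ∧ Γ (((x : ℂ)) : OnePoint ℂ) = 4)
    (hX : Γ '' ((fun z : ℂ => (z : OnePoint ℂ)) '' {z : ℂ | z.im = 0} ∪ {∞}) = {1, 4, 5})
    (d : ℂ) (hd : d ≠ 0) (hdim : d.im ≠ 0)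
    (hL : Γ '' ((fun z : ℂ => (z : OnePoint ℂ)) '' {z : ℂ | ∃ t : ℝ, z = (t : ℂ) * d} ∪ {∞}) =
      {1, 2, 3}) :
    (∀ i ∈ ({4, 5} : Set ℕ), ∀ x ∈ xAxisColorSet Γ i,
      ∀ y₂ ∈ lineColorSet Γ d 2, ∀ y₃ ∈ lineColorSet Γ d 3,
        y₂ * y₃ / x ∈ xAxisColorSet Γ i) ∧
    (∀ j ∈ ({2, 3} : Set ℕ), ∀ y ∈ lineColorSet Γ d j,
      ∀ x₄ ∈ xAxisColorSet Γ 4, ∀ x₅ ∈ xAxisColorSet Γ 5,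
        x₄ * x₅ / y ∈ lineColorSet Γ d j) :=
  function_h_claim_general Γ hrange h3 h0 hX d hdim hL
end
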